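/- arXiv:1104.5096 — 6 statements merged into one kernel-verified Lean document; each statement's English description precedes it below -/
import Mathlib

section
/- Let b : ℝ^m → ℝ^m satisfy the one-sided Lipschitz condition ⟨x − y, b(x) − b(y)⟩ ≤ C_b |x − y|² for all x, y. Let 𝒪 ⊆ ℝ^m be closed convex, and suppose X, Y : [0,T] → 𝒪 are two absolutely continuous functions satisfying X'(t) = b(X(t)) − k_X(t) and Y'(t) = b(Y(t)) − k_Y(t) a.e., where k_X(t) is in the normal cone of 𝒪 at X(t) and k_Y(t) in the normal cone at Y(t) for a.e. t. Then for all t ∈ [0,T], |X(t) − Y(t)| ≤ e^{C_b t} |X(0) − Y(0)|. -/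
/-!
Write `D = X - Y`. Since `D` is a primitive of an integrable function, `‖D‖²` is absolutely
continuous with a.e. derivative `2⟪D, D'⟫`. As `kX t` is normal to `𝒪` at `X t` and `Y t ∈ 𝒪`,
`⟪kX t, X t - Y t⟫ ≥ 0`, and symmetrically for `kY`; so the reflection terms can only decrease
`⟪D, D'⟫`, and the one-sided Lipschitz bound gives `(‖D‖²)' ≤ 2 C_b ‖D‖²` a.e. Hence
`e^{-2 C_b t} ‖D t‖²` is absolutely continuous with a.e. nonpositive derivative, so nonincreasing.
-/

open RealInnerProductSpace MeasureTheory Set Filter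

theorem AbsolutelyContinuousOnInterval.of_dist_le_mul {X Y : Type*} [PseudoMetricSpace X]
    [PseudoMetricSpace Y] {f : ℝ → X} {F : ℝ → Y} {a b C : ℝ}
    (hF : AbsolutelyContinuousOnInterval F a b)
    (h : ∀ x ∈ uIcc a b, ∀ y ∈ uIcc a b, dist (f x) (f y) ≤ C * dist (F x) (F y)) :
    AbsolutelyContinuousOnInterval f a b := by
  unfold AbsolutelyContinuousOnInterval at hF ⊢
  have hCF := hF.const_mul C
  rw [mul_zero] at hCF
  refine squeeze_zero' (Eventually.of_forall fun E => Finset.sum_nonneg fun _ _ => dist_nonneg)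
    ?_ hCF
  filter_upwards [eventually_inf_principal.mpr (Eventually.of_forall fun _ hE => hE)]
    with E hE
  rw [Finset.mul_sum]
  exact Finset.sum_le_sum fun i hi => h _ (hE.1 i hi).1 _ (hE.1 i hi).2

theorem IntervalIntegrable.absolutelyContinuousOnInterval_integral {E : Type*}
    [NormedAddCommGroup E] [NormedSpace ℝ E] {g : ℝ → E} {a b c : ℝ}
    (hg : IntervalIntegrable g volume a b) (hc : c ∈ uIcc a b) :
    AbsolutelyContinuousOnInterval (fun x => ∫ t in c..x, g t) a b := by
  refine (hg.norm.absolutelyContinuousOnInterval_intervalIntegral hc).of_dist_le_mul (C := 1)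
    fun x hx y hy => ?_
  have hcx := hg.mono_set (uIcc_subset_uIcc hc hx)
  have hcy := hg.mono_set (uIcc_subset_uIcc hc hy)
  rw [one_mul, dist_eq_norm, dist_eq_norm, intervalIntegral.integral_interval_sub_left hcx hcy,
    intervalIntegral.integral_interval_sub_left hcx.norm hcy.norm, Real.norm_eq_abs]
  exact intervalIntegral.norm_integral_le_abs_integral_norm

theorem AbsolutelyContinuousOnInterval.norm_sq {F : Type*} [SeminormedAddCommGroup F]
    {f : ℝ → F} {a b : ℝ} (hf : AbsolutelyContinuousOnInterval f a b) :
    AbsolutelyContinuousOnInterval (fun x => ‖f x‖ ^ 2) a b := by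
  obtain ⟨M, hM⟩ := hf.exists_bound
  refine hf.of_dist_le_mul (C := 2 * M) fun x hx y hy => ?_
  calc dist (‖f x‖ ^ 2) (‖f y‖ ^ 2) = |‖f x‖ - ‖f y‖| * (‖f x‖ + ‖f y‖) := by
        rw [Real.dist_eq, sq_sub_sq, abs_mul, abs_of_nonneg (by positivity), mul_comm]
    _ ≤ ‖f x - f y‖ * (M + M) := by
        gcongr
        exacts [abs_norm_sub_norm_le _ _, hM x hx, hM y hy]
    _ = 2 * M * dist (f x) (f y) := by rw [dist_eq_norm]; ring

theorem AbsolutelyContinuousOnInterval.le_of_ae_hasDerivAt_nonpos {f f' : ℝ → ℝ} {a b : ℝ}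
    (hab : a ≤ b) (hf : AbsolutelyContinuousOnInterval f a b)
    (hf' : ∀ᵐ x, x ∈ Icc a b → HasDerivAt f (f' x) x ∧ f' x ≤ 0) : f b ≤ f a := by
  rw [← sub_nonpos, ← hf.integral_deriv_eq_sub, intervalIntegral.integral_of_le hab]
  refine setIntegral_nonpos_ae measurableSet_Ioc ?_
  filter_upwards [hf'] with x hx hxI
  obtain ⟨hderiv, hle⟩ := hx (Ioc_subset_Icc_self hxI)
  rwa [hderiv.deriv]

theorem AbsolutelyContinuousOnInterval.le_exp_mul_of_ae_hasDerivAt_le {φ φ' : ℝ → ℝ}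
    {a b K : ℝ} (hφ : AbsolutelyContinuousOnInterval φ a b)
    (hφ' : ∀ᵐ x, x ∈ Icc a b → HasDerivAt φ (φ' x) x ∧ φ' x ≤ K * φ x)
    {t : ℝ} (ht : t ∈ Icc a b) :
    φ t ≤ Real.exp (K * (t - a)) * φ a := by
  set ψ : ℝ → ℝ := fun x => Real.exp (-K * x) * φ x
  have hexp : AbsolutelyContinuousOnInterval (fun x => Real.exp (-K * x)) a t := by
    have : ContDiff ℝ 1 fun x => Real.exp (-K * x) := by fun_prop
    exact this.contDiffOn.absolutelyContinuousOnInterval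
  have hψ : AbsolutelyContinuousOnInterval ψ a t :=
    hexp.fun_mul (hφ.mono (uIcc_subset_uIcc left_mem_uIcc (mem_uIcc_of_le ht.1 ht.2)))
  have hψ' : ∀ᵐ x, x ∈ Icc a t →
      HasDerivAt ψ (Real.exp (-K * x) * (φ' x - K * φ x)) x ∧
        Real.exp (-K * x) * (φ' x - K * φ x) ≤ 0 := by
    filter_upwards [hφ'] with x hx hxI
    obtain ⟨hderiv, hle⟩ := hx (Icc_subset_Icc_right ht.2 hxI)
    refine ⟨?_, mul_nonpos_of_nonneg_of_nonpos (Real.exp_nonneg _) (by linarith)⟩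
    exact ((((hasDerivAt_id' x).const_mul (-K)).exp).mul hderiv).congr_deriv (by ring)
  have hmono := hψ.le_of_ae_hasDerivAt_nonpos ht.1 hψ'
  calc φ t = Real.exp (K * t) * ψ t := by
        rw [← mul_assoc, ← Real.exp_add, show K * t + -K * t = 0 by ring, Real.exp_zero, one_mul]
    _ ≤ Real.exp (K * t) * ψ a := by gcongr
    _ = Real.exp (K * (t - a)) * φ a := by
        rw [← mul_assoc, ← Real.exp_add]
        congr 2
        ring

section

variable {E : Type*} [NormedAddCommGroup E] [NormedSpace ℝ E] {f g : ℝ → E} {a b : ℝ}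

theorem absolutelyContinuousOnInterval_of_eq_add_integral (hab : a ≤ b)
    (hg : IntervalIntegrable g volume a b) (hf : ∀ t ∈ Icc a b, f t = f a + ∫ s in a..t, g s) :
    AbsolutelyContinuousOnInterval f a b := by
  refine (hg.absolutelyContinuousOnInterval_integral left_mem_uIcc).of_dist_le_mul (C := 1)
    fun x hx y hy => ?_
  rw [uIcc_of_le hab] at hx hy
  rw [one_mul, hf x hx, hf y hy, dist_add_left]

theorem ae_hasDerivAt_of_eq_add_integral [CompleteSpace E] (hab : a ≤ b)
    (hg : IntervalIntegrable g volume a b) (hf : ∀ t ∈ Icc a b, f t = f a + ∫ s in a..t, g s) :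
    ∀ᵐ x, x ∈ Icc a b → HasDerivAt f (g x) x := by
  filter_upwards [hg.ae_hasDerivAt_integral, (Ioo_ae_eq_Icc (μ := volume)).mem_iff]
    with x hx hIoo hxI
  have hxI' : x ∈ Ioo a b := hIoo.2 hxI
  rw [uIcc_of_le hab] at hx
  refine ((hx hxI a (left_mem_Icc.2 hab)).const_add (f a)).congr_of_eventuallyEq ?_
  filter_upwards [Ioo_mem_nhds hxI'.1 hxI'.2] with y hy using hf y (Ioo_subset_Icc_self hy)

end

theorem inner_sub_sub_sub_le_of_inner_nonneg {E : Type*} [NormedAddCommGroup E]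
    [InnerProductSpace ℝ E] {x y u v kx ky : E} (hkx : 0 ≤ ⟪kx, x - y⟫) (hky : 0 ≤ ⟪ky, y - x⟫) :
    ⟪x - y, (u - kx) - (v - ky)⟫ ≤ ⟪x - y, u - v⟫ := by
  have hyx : ⟪ky, y - x⟫ = -⟪x - y, ky⟫ := by
    rw [← neg_sub, inner_neg_right, real_inner_comm]
  rw [real_inner_comm] at hkx
  rw [show (u - kx) - (v - ky) = (u - v) - kx + ky by abel, inner_add_right, inner_sub_right]
  linarith

theorem reflected_ode_contraction_general
    (m : ℕ) (T Cb : ℝ)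
    (b : EuclideanSpace ℝ (Fin m) → EuclideanSpace ℝ (Fin m))
    (hb : ∀ x y, ⟪x - y, b x - b y⟫ ≤ Cb * ‖x - y‖ ^ 2)
    (O : Set (EuclideanSpace ℝ (Fin m)))
    (X Y kX kY : ℝ → EuclideanSpace ℝ (Fin m))
    (hXO : ∀ t ∈ Set.Icc 0 T, X t ∈ O) (hYO : ∀ t ∈ Set.Icc 0 T, Y t ∈ O)
    (hXint : IntervalIntegrable (fun s => b (X s) - kX s) volume 0 T)
    (hYint : IntervalIntegrable (fun s => b (Y s) - kY s) volume 0 T)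
    (hX : ∀ t ∈ Set.Icc 0 T, X t = X 0 + ∫ s in (0:ℝ)..t, (b (X s) - kX s))
    (hY : ∀ t ∈ Set.Icc 0 T, Y t = Y 0 + ∫ s in (0:ℝ)..t, (b (Y s) - kY s))
    (hkX : ∀ᵐ t ∂(volume.restrict (Set.Icc (0:ℝ) T)), ∀ z ∈ O, ⟪kX t, X t - z⟫ ≥ 0)
    (hkY : ∀ᵐ t ∂(volume.restrict (Set.Icc (0:ℝ) T)), ∀ z ∈ O, ⟪kY t, Y t - z⟫ ≥ 0) :
    ∀ t ∈ Set.Icc 0 T, ‖X t - Y t‖ ≤ Real.exp (Cb * t) * ‖X 0 - Y 0‖ := by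
  intro t ht
  have hT : 0 ≤ T := ht.1.trans ht.2
  set g := fun s => (b (X s) - kX s) - (b (Y s) - kY s)
  have hg : IntervalIntegrable g volume 0 T := hXint.sub hYint
  have hD : ∀ s ∈ Icc 0 T, (X - Y) s = (X - Y) 0 + ∫ r in 0..s, g r := by
    intro s hs
    have hsub : uIcc 0 s ⊆ uIcc 0 T := uIcc_subset_uIcc_left (mem_uIcc_of_le hs.1 hs.2)
    rw [Pi.sub_apply, Pi.sub_apply, hX s hs, hY s hs,
      intervalIntegral.integral_sub (hXint.mono_set hsub) (hYint.mono_set hsub)]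
    abel
  have hφ := (absolutelyContinuousOnInterval_of_eq_add_integral hT hg hD).norm_sq
  have hφ' : ∀ᵐ s, s ∈ Icc 0 T →
      HasDerivAt (fun s => ‖(X - Y) s‖ ^ 2) (2 * ⟪(X - Y) s, g s⟫) s ∧
        2 * ⟪(X - Y) s, g s⟫ ≤ 2 * Cb * ‖(X - Y) s‖ ^ 2 := by
    rw [ae_restrict_iff' measurableSet_Icc] at hkX hkY
    filter_upwards [ae_hasDerivAt_of_eq_add_integral hT hg hD, hkX, hkY] with s hderiv hsX hsY hs
    refine ⟨(hderiv hs).norm_sq, ?_⟩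
    have := (inner_sub_sub_sub_le_of_inner_nonneg (u := b (X s)) (v := b (Y s))
      (hsX hs (Y s) (hYO s hs)) (hsY hs (X s) (hXO s hs))).trans (hb (X s) (Y s))
    simp only [Pi.sub_apply, g]
    linarith
  have hsq := hφ.le_exp_mul_of_ae_hasDerivAt_le hφ' ht
  rw [sub_zero, show 2 * Cb * t = Cb * t + Cb * t by ring, Real.exp_add] at hsq
  simp only [Pi.sub_apply] at hsq
  exact (pow_le_pow_iff_left₀ (norm_nonneg _) (by positivity) two_ne_zero).1 (by linarith)

/-- One-sided Lipschitz drift with normal-cone reflection: contraction estimate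
`|X(t) − Y(t)| ≤ e^{C_b t}|X(0) − Y(0)|`. -/
theorem reflected_ode_contraction
    (m : ℕ) (T Cb : ℝ) (hT : 0 < T)
    (b : EuclideanSpace ℝ (Fin m) → EuclideanSpace ℝ (Fin m))
    (hb : ∀ x y, ⟪x - y, b x - b y⟫ ≤ Cb * ‖x - y‖ ^ 2)
    (O : Set (EuclideanSpace ℝ (Fin m))) (hclosed : IsClosed O) (hconv : Convex ℝ O)
    (X Y kX kY : ℝ → EuclideanSpace ℝ (Fin m))
    (hXO : ∀ t ∈ Set.Icc 0 T, X t ∈ O) (hYO : ∀ t ∈ Set.Icc 0 T, Y t ∈ O)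
    (hXint : IntervalIntegrable (fun s => b (X s) - kX s) volume 0 T)
    (hYint : IntervalIntegrable (fun s => b (Y s) - kY s) volume 0 T)
    (hX : ∀ t ∈ Set.Icc 0 T, X t = X 0 + ∫ s in (0:ℝ)..t, (b (X s) - kX s))
    (hY : ∀ t ∈ Set.Icc 0 T, Y t = Y 0 + ∫ s in (0:ℝ)..t, (b (Y s) - kY s))
    (hkX : ∀ᵐ t ∂(volume.restrict (Set.Icc (0:ℝ) T)), ∀ z ∈ O, ⟪kX t, X t - z⟫ ≥ 0)
    (hkY : ∀ᵐ t ∂(volume.restrict (Set.Icc (0:ℝ) T)), ∀ z ∈ O, ⟪kY t, Y t - z⟫ ≥ 0) :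
    ∀ t ∈ Set.Icc 0 T, ‖X t - Y t‖ ≤ Real.exp (Cb * t) * ‖X 0 - Y 0‖ :=
  reflected_ode_contraction_general m T Cb b hb O X Y kX kY hXO hYO hXint hYint hX hY hkX hkY
end

section
/- Let σ : ℝ^m → L(ℝ^d, ℝ^m) be Lipschitz with constant C_σ, let X : [0,T] → ℝ^m be continuous, and let ḣ_n ∈ L²(0,T; ℝ^d) converge weakly in L² to ḣ. Then w_n(t) = ∫₀^t σ(X(s))(ḣ_n(s) − ḣ(s)) ds converges to 0 uniformly on [0,T]. -/
/-!
Write `f n = ḣ_n - ḣ` and `A s = σ (X s)`; `A` is continuous, hence bounded by some `K` on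
`[0, T]`. A weakly convergent sequence is bounded (uniform boundedness principle), say
`‖f n‖_{L²} ≤ M`, so by Cauchy–Schwarz `‖w_n t - w_n t'‖ ≤ K M √|t - t'|`: the `w_n` are
equicontinuous. For fixed `t` and `v`, `⟪v, w_n t⟫ = ∫ ⟪f n, 𝟙_{(0,t]} A* v⟫ → 0`, and in finite
dimension this gives `w_n t → 0`. On the compact `[0, T]`, equicontinuity upgrades pointwise
convergence to uniform convergence (Arzelà–Ascoli).
-/

open RealInnerProductSpace MeasureTheory Filter Set Topology NNReal ContinuousLinearMap
open scoped Interval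

theorem tendstoUniformlyOn_of_tendsto_of_continuity_modulus {X Y ι : Type*}
    [PseudoMetricSpace X] [PseudoMetricSpace Y] {S : Set X} (hS : IsCompact S)
    {F : ι → X → Y} {f : X → Y} {l : Filter ι} (b : ℝ → ℝ) (hb : Tendsto b (𝓝 0) (𝓝 0))
    (hF : ∀ x ∈ S, ∀ y ∈ S, ∀ i, dist (F i x) (F i y) ≤ b (dist x y))
    (hlim : ∀ x ∈ S, Tendsto (fun i => F i x) l (𝓝 (f x))) :
    TendstoUniformlyOn F f l S := by
  have : CompactSpace S := isCompact_iff_compactSpace.mp hS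
  have hequi : Equicontinuous fun i => S.domRestrict (F i) :=
    Metric.equicontinuous_of_continuity_modulus b hb _ fun x y i => hF x x.2 y y.2 i
  rw [tendstoUniformlyOn_iff_restrict]
  exact UniformFun.tendsto_iff_tendstoUniformly.mp <|
    (hequi.tendsto_uniformFun_iff_pi l _).mpr <| tendsto_pi_nhds.mpr fun x => hlim x x.2

theorem tendsto_zero_of_forall_tendsto_inner {ι F : Type*} [NormedAddCommGroup F]
    [InnerProductSpace ℝ F] [FiniteDimensional ℝ F] {l : Filter ι} {x : ι → F}
    (h : ∀ v, Tendsto (fun i => ⟪v, x i⟫) l (𝓝 0)) : Tendsto x l (𝓝 0) := by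
  let b := stdOrthonormalBasis ℝ F
  have hsum : Tendsto (fun i => ∑ j, ⟪b j, x i⟫ • b j) l (𝓝 (∑ j, (0 : ℝ) • b j)) :=
    tendsto_finsetSum _ fun j _ => (h (b j)).smul_const (b j)
  simpa only [b.sum_repr', zero_smul, Finset.sum_const_zero] using hsum

section Normed

variable {α E F : Type*} [MeasurableSpace α] {μ : Measure α} [NormedAddCommGroup E]

theorem integral_norm_le_eLpNorm_mul_sqrt [IsFiniteMeasure μ] {f : α → E} (hf : MemLp f 2 μ) :
    ∫ a, ‖f a‖ ∂μ ≤ (eLpNorm f 2 μ).toReal * √(μ.real univ) := by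
  have holder := eLpNorm_le_eLpNorm_mul_rpow_measure_univ one_le_two hf.1
  rw [eLpNorm_one_eq_lintegral_enorm] at holder
  rw [integral_norm_eq_lintegral_enorm hf.1, Real.sqrt_eq_rpow, measureReal_def,
    ENNReal.toReal_rpow, ← ENNReal.toReal_mul]
  refine ENNReal.toReal_mono ?_ (holder.trans_eq ?_)
  · exact ENNReal.mul_ne_top hf.2.ne (by simp [measure_ne_top])
  · norm_num

variable [NormedSpace ℝ E] [NormedAddCommGroup F] [NormedSpace ℝ F]

theorem MeasureTheory.Integrable.clm_apply_of_norm_le {A : α → E →L[ℝ] F} {f : α → E} {K : ℝ≥0}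
    (hAm : AEStronglyMeasurable A μ) (hA : ∀ᵐ a ∂μ, ‖A a‖ ≤ K) (hf : Integrable f μ) :
    Integrable (fun a => A a (f a)) μ := by
  refine Integrable.mono' (hf.norm.const_mul K)
    (isBoundedBilinearMap_apply.continuous.comp_aestronglyMeasurable₂ hAm hf.1) ?_
  filter_upwards [hA] with a ha
  exact (A a).le_of_opNorm_le ha (f a)

theorem norm_integral_clm_apply_le [IsFiniteMeasure μ] {A : α → E →L[ℝ] F} {f : α → E}
    {K M : ℝ≥0} (hA : ∀ᵐ a ∂μ, ‖A a‖ ≤ K) (hf : MemLp f 2 μ) (hfM : eLpNorm f 2 μ ≤ M) :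
    ‖∫ a, A a (f a) ∂μ‖ ≤ K * M * √(μ.real univ) := by
  have hM : (eLpNorm f 2 μ).toReal ≤ M := ENNReal.toReal_le_of_le_ofReal M.2 (by simpa using hfM)
  calc ‖∫ a, A a (f a) ∂μ‖ ≤ ∫ a, ‖A a (f a)‖ ∂μ := norm_integral_le_integral_norm _
    _ ≤ ∫ a, K * ‖f a‖ ∂μ := by
      refine integral_mono_of_nonneg (.of_forall fun a => norm_nonneg _)
        ((hf.integrable one_le_two).norm.const_mul K) ?_
      filter_upwards [hA] with a ha
      exact (A a).le_of_opNorm_le ha (f a)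
    _ = K * ∫ a, ‖f a‖ ∂μ := integral_const_mul _ _
    _ ≤ K * ((eLpNorm f 2 μ).toReal * √(μ.real univ)) := by
      gcongr; exact integral_norm_le_eLpNorm_mul_sqrt hf
    _ ≤ K * M * √(μ.real univ) := by
      rw [← mul_assoc]; gcongr

theorem norm_intervalIntegral_clm_apply_le {S : Set ℝ} {A : ℝ → E →L[ℝ] F} {f : ℝ → E}
    {K M : ℝ≥0} {a b : ℝ} (hab : Ι a b ⊆ S) (hA : ∀ s ∈ S, ‖A s‖ ≤ K)
    (hf : MemLp f 2 (volume.restrict S)) (hfM : eLpNorm f 2 (volume.restrict S) ≤ M) :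
    ‖∫ s in a..b, A s (f s)‖ ≤ K * M * √|b - a| := by
  have hle : volume.restrict (Ι a b) ≤ volume.restrict S := Measure.restrict_mono hab le_rfl
  have : IsFiniteMeasure (volume.restrict (Ι a b)) := Real.isFiniteMeasure_restrict_Ioc _ _
  have hvol : (volume.restrict (Ι a b)).real univ = |b - a| := by
    rw [measureReal_restrict_apply_univ, measureReal_def, Real.volume_uIoc,
      ENNReal.toReal_ofReal (abs_nonneg _)]
  rw [intervalIntegral.norm_integral_eq_norm_integral_uIoc, ← hvol]
  exact norm_integral_clm_apply_le
    (ae_restrict_of_forall_mem measurableSet_uIoc fun s hs => hA s (hab hs))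
    (hf.mono_measure hle) ((eLpNorm_mono_measure f hle).trans hfM)

theorem dist_intervalIntegral_clm_apply_le {A : ℝ → E →L[ℝ] F} {f : ℝ → E} {K M : ℝ≥0}
    {a b x y : ℝ} (hx : x ∈ Icc a b) (hy : y ∈ Icc a b)
    (hAm : AEStronglyMeasurable A (volume.restrict (Icc a b))) (hA : ∀ s ∈ Icc a b, ‖A s‖ ≤ K)
    (hf : MemLp f 2 (volume.restrict (Icc a b)))
    (hfM : eLpNorm f 2 (volume.restrict (Icc a b)) ≤ M) :
    dist (∫ s in a..x, A s (f s)) (∫ s in a..y, A s (f s)) ≤ K * M * √(dist x y) := by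
  have hint : IntegrableOn (fun s => A s (f s)) (Icc a b) :=
    (hf.integrable one_le_two).clm_apply_of_norm_le hAm
      (ae_restrict_of_forall_mem measurableSet_Icc hA)
  have hsub : ∀ z ∈ Icc a b, IntervalIntegrable (fun s => A s (f s)) volume a z := fun z hz =>
    (hint.mono_set (uIcc_subset_Icc (left_mem_Icc.2 (hz.1.trans hz.2)) hz)).intervalIntegrable
  rw [dist_eq_norm, intervalIntegral.integral_interval_sub_left (hsub x hx) (hsub y hy),
    Real.dist_eq]
  exact norm_intervalIntegral_clm_apply_le (uIoc_subset_uIcc.trans (uIcc_subset_Icc hy hx))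
    hA hf hfM

end Normed

section InnerProduct

variable {α ι E F : Type*} [MeasurableSpace α] {μ : Measure α}
  [NormedAddCommGroup E] [InnerProductSpace ℝ E] [NormedAddCommGroup F] [InnerProductSpace ℝ F]

theorem MeasureTheory.MemLp.integrable_inner {f g : α → E} (hf : MemLp f 2 μ)
    (hg : MemLp g 2 μ) : Integrable (fun a => ⟪f a, g a⟫) μ :=
  (L2.integrable_inner (hf.toLp f) (hg.toLp g)).congr <| by
    filter_upwards [hf.coeFn_toLp, hg.coeFn_toLp] with a hfa hga
    rw [hfa, hga]

def TendstoWeaklyInL2 (l : Filter ι) (μ : Measure α) (f : ι → α → E) (f₀ : α → E) : Prop :=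
  ∀ g : α → E, MemLp g 2 μ →
    Tendsto (fun i => ∫ a, ⟪f i a, g a⟫ ∂μ) l (𝓝 (∫ a, ⟪f₀ a, g a⟫ ∂μ))

namespace TendstoWeaklyInL2

variable {l : Filter ι} {f : ι → α → E} {f₀ : α → E}

theorem sub_limit (hw : TendstoWeaklyInL2 l μ f f₀) (hf : ∀ i, MemLp (f i) 2 μ)
    (hf₀ : MemLp f₀ 2 μ) : TendstoWeaklyInL2 l μ (fun i => f i - f₀) 0 := by
  intro g hg
  have hsub : ∀ i, ∫ a, ⟪f i a - f₀ a, g a⟫ ∂μ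
      = ∫ a, ⟪f i a, g a⟫ ∂μ - ∫ a, ⟪f₀ a, g a⟫ ∂μ := fun i => by
    simp only [inner_sub_left]
    exact integral_sub ((hf i).integrable_inner hg) (hf₀.integrable_inner hg)
  simpa [hsub] using (hw g hg).sub_const (∫ a, ⟪f₀ a, g a⟫ ∂μ)

theorem restrict (hw : TendstoWeaklyInL2 l μ f f₀) {s : Set α} (hs : MeasurableSet s) :
    TendstoWeaklyInL2 l (μ.restrict s) f f₀ := by
  intro g hg
  have hind : ∀ u : α → E, ∫ a, ⟪u a, s.indicator g a⟫ ∂μ = ∫ a in s, ⟪u a, g a⟫ ∂μ := by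
    intro u
    rw [← integral_indicator hs]
    congr 1 with a
    by_cases ha : a ∈ s <;> simp [ha]
  simpa only [hind] using hw _ ((memLp_indicator_iff_restrict hs).2 hg)

theorem exists_eLpNorm_le [CompleteSpace E] {f : ℕ → α → E}
    (hw : TendstoWeaklyInL2 atTop μ f f₀) (hf : ∀ n, MemLp (f n) 2 μ) :
    ∃ M : ℝ≥0, ∀ n, eLpNorm (f n) 2 μ ≤ M := by
  let Φ : ℕ → Lp E 2 μ →L[ℝ] ℝ := fun n => innerSL ℝ ((hf n).toLp (f n))
  have hΦ : ∀ n (g : Lp E 2 μ), Φ n g = ∫ a, ⟪f n a, g a⟫ ∂μ := fun n g => by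
    simp only [Φ, innerSL_apply_apply, L2.inner_def]
    refine integral_congr_ae ?_
    filter_upwards [(hf n).coeFn_toLp] with a ha
    rw [ha]
  obtain ⟨C, hC⟩ := banach_steinhaus fun g : Lp E 2 μ => by
    obtain ⟨C, hC⟩ := (hw g (Lp.memLp g)).norm.bddAbove_range
    exact ⟨C, fun n => by rw [hΦ]; exact hC ⟨n, rfl⟩⟩
  refine ⟨C.toNNReal, fun n => ?_⟩
  have hnorm : ‖Φ n‖ = (eLpNorm (f n) 2 μ).toReal := by
    simp only [Φ, innerSL_apply_norm, Lp.norm_toLp]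
  calc eLpNorm (f n) 2 μ = ENNReal.ofReal ‖Φ n‖ := by
        rw [hnorm, ENNReal.ofReal_toReal (hf n).2.ne]
    _ ≤ ENNReal.ofReal C := ENNReal.ofReal_le_ofReal (hC n)

theorem tendsto_integral_clm_apply [IsFiniteMeasure μ] [CompleteSpace E]
    [FiniteDimensional ℝ F] {A : α → E →L[ℝ] F} {K : ℝ≥0} (hw : TendstoWeaklyInL2 l μ f 0)
    (hf : ∀ i, MemLp (f i) 2 μ) (hAm : AEStronglyMeasurable A μ) (hA : ∀ᵐ a ∂μ, ‖A a‖ ≤ K) :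
    Tendsto (fun i => ∫ a, A a (f i a) ∂μ) l (𝓝 0) := by
  refine tendsto_zero_of_forall_tendsto_inner fun v => ?_
  have hg : MemLp (fun a => adjoint (A a) v) 2 μ := by
    refine MemLp.of_bound ((adjoint.continuous.comp_aestronglyMeasurable hAm
      ).apply_continuousLinearMap v) (K * ‖v‖) ?_
    filter_upwards [hA] with a ha
    exact (adjoint (A a)).le_of_opNorm_le (by simpa using ha) v
  have hinner : ∀ i, ⟪v, ∫ a, A a (f i a) ∂μ⟫ = ∫ a, ⟪f i a, adjoint (A a) v⟫ ∂μ := fun i => by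
    rw [← integral_inner (((hf i).integrable one_le_two).clm_apply_of_norm_le hAm hA)]
    simp only [adjoint_inner_right, real_inner_comm]
  simpa [hinner] using hw _ hg

theorem tendsto_intervalIntegral_clm_apply [CompleteSpace E] [FiniteDimensional ℝ F]
    {f : ι → ℝ → E} {A : ℝ → E →L[ℝ] F} {K : ℝ≥0} {a b t : ℝ}
    (hw : TendstoWeaklyInL2 l (volume.restrict (Icc a b)) f 0)
    (hf : ∀ i, MemLp (f i) 2 (volume.restrict (Icc a b)))
    (hAm : AEStronglyMeasurable A (volume.restrict (Icc a b))) (hA : ∀ s ∈ Icc a b, ‖A s‖ ≤ K)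
    (ht : t ∈ Icc a b) :
    Tendsto (fun i => ∫ s in a..t, A s (f i s)) l (𝓝 0) := by
  have hrestrict : (volume.restrict (Icc a b)).restrict (Ioc a t) = volume.restrict (Ioc a t) := by
    rw [Measure.restrict_restrict measurableSet_Ioc,
      inter_eq_left.2 (Ioc_subset_Icc_self.trans (Icc_subset_Icc_right ht.2))]
  simp only [intervalIntegral.integral_of_le ht.1, ← hrestrict]
  exact (hw.restrict measurableSet_Ioc).tendsto_integral_clm_apply (fun i => (hf i).restrict _)
    hAm.restrict (ae_restrict_of_ae (ae_restrict_of_forall_mem measurableSet_Icc hA))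

end TendstoWeaklyInL2

end InnerProduct

theorem weak_convergence_gives_uniform_convergence_general
    (m d : ℕ) (T Cσ : ℝ)
    (σ : EuclideanSpace ℝ (Fin m) → (EuclideanSpace ℝ (Fin d) →L[ℝ] EuclideanSpace ℝ (Fin m)))
    (hσ : LipschitzWith (Real.toNNReal Cσ) σ)
    (X : ℝ → EuclideanSpace ℝ (Fin m)) (hX : ContinuousOn X (Set.Icc 0 T))
    (hn : ℕ → ℝ → EuclideanSpace ℝ (Fin d)) (h : ℝ → EuclideanSpace ℝ (Fin d))
    (hhn : ∀ n, MemLp (hn n) 2 (volume.restrict (Set.Icc (0:ℝ) T)))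
    (hh : MemLp h 2 (volume.restrict (Set.Icc (0:ℝ) T)))
    (hweak : ∀ g : ℝ → EuclideanSpace ℝ (Fin d),
      MemLp g 2 (volume.restrict (Set.Icc (0:ℝ) T)) →
      Tendsto (fun n => ∫ s in Set.Icc (0:ℝ) T, ⟪hn n s, g s⟫) atTop
        (nhds (∫ s in Set.Icc (0:ℝ) T, ⟪h s, g s⟫))) :
    TendstoUniformlyOn (fun n t => ∫ s in (0:ℝ)..t, σ (X s) (hn n s - h s))
      (fun _ => 0) atTop (Set.Icc 0 T) := by
  have hf : ∀ n, MemLp (hn n - h) 2 (volume.restrict (Icc 0 T)) := fun n => (hhn n).sub hh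
  have hw : TendstoWeaklyInL2 atTop (volume.restrict (Icc 0 T)) (fun n => hn n - h) 0 :=
    TendstoWeaklyInL2.sub_limit hweak hhn hh
  obtain ⟨M, hM⟩ := hw.exists_eLpNorm_le hf
  have hA : ContinuousOn (fun s => σ (X s)) (Icc 0 T) := hσ.continuous.comp_continuousOn hX
  have hAm : AEStronglyMeasurable (fun s => σ (X s)) (volume.restrict (Icc 0 T)) :=
    hA.aestronglyMeasurable measurableSet_Icc
  obtain ⟨C, hC⟩ := isCompact_Icc.exists_bound_of_continuousOn hA
  have hK : ∀ s ∈ Icc 0 T, ‖σ (X s)‖ ≤ C.toNNReal :=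
    fun s hs => (hC s hs).trans (Real.le_coe_toNNReal C)
  refine tendstoUniformlyOn_of_tendsto_of_continuity_modulus isCompact_Icc
    (fun r => C.toNNReal * M * √r) ?_ ?_ ?_
  · exact Continuous.tendsto' (by fun_prop) 0 0 (by simp)
  · exact fun x hx y hy n => dist_intervalIntegral_clm_apply_le hx hy hAm hK (hf n) (hM n)
  · exact fun t ht => hw.tendsto_intervalIntegral_clm_apply hf hAm hK ht

/-- If `ḣ_n → ḣ` weakly in `L²(0,T;ℝᵈ)`, then
`w_n(t) = ∫₀ᵗ σ(X(s))(ḣ_n(s) − ḣ(s)) ds → 0` uniformly on `[0,T]`. -/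
theorem weak_convergence_gives_uniform_convergence
    (m d : ℕ) (T Cσ : ℝ) (hT : 0 < T)
    (σ : EuclideanSpace ℝ (Fin m) → (EuclideanSpace ℝ (Fin d) →L[ℝ] EuclideanSpace ℝ (Fin m)))
    (hσ : LipschitzWith (Real.toNNReal Cσ) σ)
    (X : ℝ → EuclideanSpace ℝ (Fin m)) (hX : ContinuousOn X (Set.Icc 0 T))
    (hn : ℕ → ℝ → EuclideanSpace ℝ (Fin d)) (h : ℝ → EuclideanSpace ℝ (Fin d))
    (hhn : ∀ n, MemLp (hn n) 2 (volume.restrict (Set.Icc (0:ℝ) T)))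
    (hh : MemLp h 2 (volume.restrict (Set.Icc (0:ℝ) T)))
    (hweak : ∀ g : ℝ → EuclideanSpace ℝ (Fin d),
      MemLp g 2 (volume.restrict (Set.Icc (0:ℝ) T)) →
      Tendsto (fun n => ∫ s in Set.Icc (0:ℝ) T, ⟪hn n s, g s⟫) atTop
        (nhds (∫ s in Set.Icc (0:ℝ) T, ⟪h s, g s⟫))) :
    TendstoUniformlyOn (fun n t => ∫ s in (0:ℝ)..t, σ (X s) (hn n s - h s))
      (fun _ => 0) atTop (Set.Icc 0 T) :=
  weak_convergence_gives_uniform_convergence_general m d T Cσ σ hσ X hX hn h hhn hh hweak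
end

section
/- Let 𝒪 ⊆ ℝ^m be closed convex with interior point a such that B(a, γ) ⊆ 𝒪. Let X : [0,T] → 𝒪 be absolutely continuous with X'(t) = F(t) − k(t) a.e., where F ∈ L¹(0,T; ℝ^m) and k(t) lies in the normal cone of 𝒪 at X(t) a.e. Then ∫₀^T |k(t)| dt ≤ (1/γ)[ (1/2)|X(0) − a|² + ∫₀^T |X(t) − a| |F(t)| dt ]. -/
/-!
Testing the normal-cone condition against the point `a + γ k / |k|` of the ball gives
`γ |k| ≤ ⟨X - a, k⟩`. Integrating, `γ ∫ |k| ≤ ∫ ⟨X - a, F⟩ - ∫ ⟨X - a, F - k⟩`, and the last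
integral is the energy `½ |X(T) - a|² - ½ |X(0) - a|² ≥ -½ |X(0) - a|²`. Since `X` is merely a
primitive of an integrable function, this chain rule is proved by Fubini instead:
`∫∫_{s ≤ t} ⟨h s, h t⟩` is half the integral of a symmetric kernel over the square,
that is `½ |∫ h|²`.
-/

open RealInnerProductSpace MeasureTheory Set

section
variable {E : Type*} [NormedAddCommGroup E] [InnerProductSpace ℝ E]

theorem mul_norm_le_inner_sub_of_closedBall_subset {O : Set E} {a x k : E} {γ : ℝ}
    (hγ : 0 ≤ γ) (hball : Metric.closedBall a γ ⊆ O) (hk : ∀ z ∈ O, 0 ≤ ⟪k, x - z⟫) :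
    γ * ‖k‖ ≤ ⟪x - a, k⟫ := by
  rcases eq_or_ne k 0 with rfl | hk0
  · simp
  have hkpos : 0 < ‖k‖ := norm_pos_iff.mpr hk0
  have hz : a + (γ / ‖k‖) • k ∈ O := hball <| by
    rw [Metric.mem_closedBall, dist_eq_norm, add_sub_cancel_left, norm_smul,
      Real.norm_of_nonneg (by positivity), div_mul_cancel₀ _ hkpos.ne']
  have hnormal := hk _ hz
  rw [show x - (a + (γ / ‖k‖) • k) = (x - a) - (γ / ‖k‖) • k by abel, inner_sub_right,
    real_inner_smul_right, real_inner_self_eq_norm_mul_norm, real_inner_comm] at hnormal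
  have hscale : γ / ‖k‖ * (‖k‖ * ‖k‖) = γ * ‖k‖ := by field_simp
  linarith

theorem IntervalIntegrable.continuousOn_inner {μ : Measure ℝ} {f g : ℝ → E} {a b : ℝ}
    (hg : IntervalIntegrable g μ a b) (hf : ContinuousOn f (uIcc a b)) :
    IntervalIntegrable (fun t => ⟪f t, g t⟫) μ a b := by
  refine (hg.norm.continuousOn_mul hf.norm).mono_fun' ?_ ?_
  · exact ((hf.mono uIoc_subset_uIcc).aestronglyMeasurable measurableSet_uIoc).inner
      hg.def'.aestronglyMeasurable
  · exact Filter.Eventually.of_forall fun t => by simpa using abs_real_inner_le_norm (f t) (g t)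

end

theorem MeasureTheory.Measure.prod_diagonal_eq_zero {α : Type*} [MeasurableSpace α]
    [MeasurableEq α] {μ ν : Measure α} [SFinite ν] [NullSingletonClass ν] :
    μ.prod ν (diagonal α) = 0 := by
  refine Measure.measure_prod_null_of_ae_null measurableSet_diagonal (ae_of_all _ fun x => ?_)
  have : Prod.mk x ⁻¹' diagonal α = {x} := by ext; simp [eq_comm]
  simp [this]

section
variable {μ : Measure ℝ} [SFinite μ] [NullSingletonClass μ]

theorem setIntegral_fst_le_snd_eq_half_of_swap_eq {G : ℝ × ℝ → ℝ} (hG : Integrable G (μ.prod μ))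
    (hsymm : ∀ p, G p.swap = G p) :
    ∫ p in {p : ℝ × ℝ | p.1 ≤ p.2}, G p ∂(μ.prod μ) = (1 / 2) * ∫ p, G p ∂(μ.prod μ) := by
  set s : Set (ℝ × ℝ) := {p | p.1 ≤ p.2}
  have hs : MeasurableSet s := measurableSet_le measurable_fst measurable_snd
  -- off the null diagonal, `sᶜ` is the mirror image of `s`; the ascriptions keep `ᶜ` from
  -- being read as the complement of a predicate
  have hcompl : (sᶜ : Set (ℝ × ℝ)) =ᵐ[μ.prod μ] (Prod.swap ⁻¹' s : Set (ℝ × ℝ)) := by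
    have hdiag : ∀ᵐ p ∂(μ.prod μ), p ∉ diagonal ℝ :=
      measure_eq_zero_iff_ae_notMem.mp Measure.prod_diagonal_eq_zero
    refine Filter.eventuallyEq_set.mpr ?_
    filter_upwards [hdiag] with p hp
    rw [mem_diagonal_iff] at hp
    change ¬p.1 ≤ p.2 ↔ p.2 ≤ p.1
    rw [not_le]
    exact ⟨le_of_lt, fun h => lt_of_le_of_ne h (Ne.symm hp)⟩
  have hswap : ∫ p in sᶜ, G p ∂(μ.prod μ) = ∫ p in s, G p ∂(μ.prod μ) := by
    rw [setIntegral_congr_set hcompl]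
    simpa only [hsymm] using Measure.measurePreserving_swap.setIntegral_preimage_emb
      MeasurableEquiv.prodComm.measurableEmbedding G s
  have htotal := integral_add_compl hs hG
  linarith

variable {E : Type*} [NormedAddCommGroup E] [InnerProductSpace ℝ E] [CompleteSpace E]

theorem integral_inner_setIntegral_Iic_self {h : ℝ → E} (hh : Integrable h μ) :
    ∫ t, ⟪∫ s in Iic t, h s ∂μ, h t⟫ ∂μ = (1 / 2) * ‖∫ t, h t ∂μ‖ ^ 2 := by
  set G : ℝ × ℝ → ℝ := fun p => ⟪h p.1, h p.2⟫
  have hG : Integrable G (μ.prod μ) :=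
    (hh.norm.mul_prod hh.norm).mono' (hh.1.comp_fst.inner hh.1.comp_snd)
      (ae_of_all _ fun p => by simpa using abs_real_inner_le_norm (h p.1) (h p.2))
  have hs : MeasurableSet {p : ℝ × ℝ | p.1 ≤ p.2} := measurableSet_le measurable_fst measurable_snd
  have hslice : ∫ p in {p : ℝ × ℝ | p.1 ≤ p.2}, G p ∂(μ.prod μ) =
      ∫ t, ⟪∫ s in Iic t, h s ∂μ, h t⟫ ∂μ := by
    rw [← integral_indicator hs, integral_prod_symm _ (hG.indicator hs)]
    refine integral_congr_ae (ae_of_all _ fun t => ?_)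
    change ∫ s, (Iic t).indicator (fun s => ⟪h s, h t⟫) s ∂μ = ⟪∫ s in Iic t, h s ∂μ, h t⟫
    simp_rw [integral_indicator measurableSet_Iic, real_inner_comm (h t)]
    exact integral_inner hh.integrableOn (h t)
  have hsquare : ∫ p, G p ∂(μ.prod μ) = ‖∫ t, h t ∂μ‖ ^ 2 := by
    calc ∫ p, G p ∂(μ.prod μ) = ∫ s, ⟪h s, ∫ t, h t ∂μ⟫ ∂μ := by
          rw [integral_prod _ hG]
          exact integral_congr_ae (ae_of_all _ fun s => integral_inner hh (h s))
      _ = ‖∫ t, h t ∂μ‖ ^ 2 := by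
          simp only [real_inner_comm (∫ t, h t ∂μ)]
          rw [integral_inner hh, real_inner_self_eq_norm_sq]
  rw [← hslice, setIntegral_fst_le_snd_eq_half_of_swap_eq hG (fun p => real_inner_comm _ _), hsquare]

theorem integral_inner_add_primitive {h : ℝ → E} {a b : ℝ} (hab : a ≤ b)
    (hh : IntervalIntegrable h μ a b) (z : E) :
    ∫ t in a..b, ⟪z + ∫ s in a..t, h s ∂μ, h t⟫ ∂μ =
      (1 / 2) * ‖z + ∫ s in a..b, h s ∂μ‖ ^ 2 - (1 / 2) * ‖z‖ ^ 2 := by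
  have hprimitive : ∫ t in a..b, ⟪∫ s in a..t, h s ∂μ, h t⟫ ∂μ =
      (1 / 2) * ‖∫ s in a..b, h s ∂μ‖ ^ 2 := by
    rw [intervalIntegral.integral_of_le hab, intervalIntegral.integral_of_le hab,
      ← integral_inner_setIntegral_Iic_self hh.1]
    refine setIntegral_congr_fun measurableSet_Ioc fun t ht => ?_
    rw [intervalIntegral.integral_of_le ht.1.le, Measure.restrict_restrict measurableSet_Iic,
      Iic_inter_Ioc_of_le ht.2]
  have hP : IntervalIntegrable (fun t => ⟪∫ s in a..t, h s ∂μ, h t⟫) μ a b :=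
    hh.continuousOn_inner (intervalIntegral.continuousOn_primitive_interval' hh left_mem_uIcc)
  calc ∫ t in a..b, ⟪z + ∫ s in a..t, h s ∂μ, h t⟫ ∂μ
      = ∫ t in a..b, (⟪z, h t⟫ + ⟪∫ s in a..t, h s ∂μ, h t⟫) ∂μ := by simp only [inner_add_left]
    _ = ⟪z, ∫ s in a..b, h s ∂μ⟫ + (1 / 2) * ‖∫ s in a..b, h s ∂μ‖ ^ 2 := by
      rw [intervalIntegral.integral_add (hh.continuousOn_inner continuousOn_const) hP, hprimitive,
        intervalIntegral.integral_of_le hab, intervalIntegral.integral_of_le hab,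
        integral_inner hh.1]
    _ = _ := by rw [norm_add_sq_real]; ring
end

theorem reflection_total_variation_bound_general
    (m : ℕ) (T γ : ℝ) (hT : 0 < T) (hγ : 0 < γ)
    (O : Set (EuclideanSpace ℝ (Fin m)))
    (a : EuclideanSpace ℝ (Fin m)) (hball : Metric.closedBall a γ ⊆ O)
    (X F k : ℝ → EuclideanSpace ℝ (Fin m))
    (hFint : IntervalIntegrable F volume 0 T)
    (hkint : IntervalIntegrable k volume 0 T)
    (hX : ∀ t ∈ Set.Icc 0 T, X t = X 0 + ∫ s in (0:ℝ)..t, (F s - k s))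
    (hk : ∀ᵐ t ∂(volume.restrict (Set.Icc (0:ℝ) T)), ∀ z ∈ O, ⟪k t, X t - z⟫ ≥ 0) :
    (∫ t in (0:ℝ)..T, ‖k t‖) ≤
      (1 / γ) * ((1 / 2) * ‖X 0 - a‖ ^ 2 + ∫ t in (0:ℝ)..T, ‖X t - a‖ * ‖F t‖) := by
  have hFk := hFint.sub hkint
  have hXa : EqOn (fun t => X t - a) (fun t => (X 0 - a) + ∫ s in (0:ℝ)..t, (F s - k s))
      (uIcc 0 T) := fun t ht => by
    rw [uIcc_of_le hT.le] at ht
    dsimp only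
    rw [hX t ht]
    abel
  have hcont : ContinuousOn (fun t => X t - a) (uIcc 0 T) :=
    (continuousOn_const.add
      (intervalIntegral.continuousOn_primitive_interval' hFk left_mem_uIcc)).congr hXa
  have henergy : -((1 / 2) * ‖X 0 - a‖ ^ 2) ≤ ∫ t in (0:ℝ)..T, ⟪X t - a, F t - k t⟫ := by
    rw [intervalIntegral.integral_congr fun t ht => congrArg (⟪·, F t - k t⟫) (hXa ht),
      integral_inner_add_primitive hT.le hFk]
    linarith [sq_nonneg ‖X 0 - a + ∫ s in (0:ℝ)..T, (F s - k s)‖]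
  have hnormal : γ * ∫ t in (0:ℝ)..T, ‖k t‖ ≤ ∫ t in (0:ℝ)..T, ⟪X t - a, k t⟫ := by
    rw [← intervalIntegral.integral_const_mul]
    refine intervalIntegral.integral_mono_ae_restrict hT.le (hkint.norm.const_mul γ)
      (hkint.continuousOn_inner hcont) (hk.mono fun t ht => ?_)
    exact mul_norm_le_inner_sub_of_closedBall_subset hγ.le hball ht
  have hsplit : ∫ t in (0:ℝ)..T, ⟪X t - a, k t⟫ =
      (∫ t in (0:ℝ)..T, ⟪X t - a, F t⟫) - ∫ t in (0:ℝ)..T, ⟪X t - a, F t - k t⟫ := by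
    rw [← intervalIntegral.integral_sub (hFint.continuousOn_inner hcont)
      (hFk.continuousOn_inner hcont)]
    simp only [inner_sub_right, sub_sub_cancel]
  have hdrift : ∫ t in (0:ℝ)..T, ⟪X t - a, F t⟫ ≤ ∫ t in (0:ℝ)..T, ‖X t - a‖ * ‖F t‖ :=
    intervalIntegral.integral_mono_on hT.le (hFint.continuousOn_inner hcont)
      (hFint.norm.continuousOn_mul hcont.norm) fun t _ => real_inner_le_norm _ _
  rw [one_div, ← div_eq_inv_mul, le_div_iff₀' hγ]
  linarith

/-- Total variation bound for the reflection term: if `B(a,γ) ⊆ O` then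
`∫₀ᵀ |k(t)| dt ≤ (1/γ)[(1/2)|X(0)−a|² + ∫₀ᵀ |X(t)−a||F(t)| dt]`. -/
theorem reflection_total_variation_bound
    (m : ℕ) (T γ : ℝ) (hT : 0 < T) (hγ : 0 < γ)
    (O : Set (EuclideanSpace ℝ (Fin m))) (hclosed : IsClosed O) (hconv : Convex ℝ O)
    (a : EuclideanSpace ℝ (Fin m)) (hball : Metric.closedBall a γ ⊆ O)
    (X F k : ℝ → EuclideanSpace ℝ (Fin m))
    (hXO : ∀ t ∈ Set.Icc 0 T, X t ∈ O)
    (hFint : IntervalIntegrable F volume 0 T)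
    (hkint : IntervalIntegrable k volume 0 T)
    (hX : ∀ t ∈ Set.Icc 0 T, X t = X 0 + ∫ s in (0:ℝ)..t, (F s - k s))
    (hk : ∀ᵐ t ∂(volume.restrict (Set.Icc (0:ℝ) T)), ∀ z ∈ O, ⟪k t, X t - z⟫ ≥ 0) :
    (∫ t in (0:ℝ)..T, ‖k t‖) ≤
      (1 / γ) * ((1 / 2) * ‖X 0 - a‖ ^ 2 + ∫ t in (0:ℝ)..T, ‖X t - a‖ * ‖F t‖) :=
  reflection_total_variation_bound_general m T γ hT hγ O a hball X F k hFint hkint hX hk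
end

section
/- Let b : ℝ^m → ℝ^m be continuous with ⟨x − y, b(x) − b(y)⟩ ≤ C_b|x − y|², let σ : ℝ^m → L(ℝ^d, ℝ^m) be Lipschitz with constant C_σ, and let 𝒪 ⊆ ℝ^m be closed convex. Suppose for h with ḣ ∈ L²(0,T;ℝ^d), X^h, Y^h : [0,T] → 𝒪 are absolutely continuous solutions of x'(t) = b(x(t)) + σ(x(t))ḣ(t) − k(t) with k(t) in the normal cone of 𝒪 at x(t) a.e., and X^h(0) = Y^h(0). Then X^h = Y^h on [0,T]. -/
/-!
Let `Z = X - Y`. Since `X` and `Y` stay in `O`, monotonicity of the normal cone gives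
`⟪Z, kX - kY⟫ ≥ 0`; with the one-sided bound on `b` and the Lipschitz bound on `σ` this yields
`⟪Z, Ż⟫ ≤ (C_b + C_σ ‖ḣ‖) ‖Z‖²` almost everywhere. As `Z` is only the primitive of an integrable
function, the energy identity `‖Z t‖² = 2 ∫₀ᵗ ⟪Ż, Z⟫` comes from Fubini, cutting `[0, t]²` along
its diagonal. Gronwall's inequality for `‖Z‖²` with the merely integrable rate
`g = 2 C_b + 2 C_σ ‖ḣ‖` then forces `Z = 0`: the closed set where `∫₀ᵗ g ‖Z‖²` vanishes grows to
the right by every step on which `∫ g < 1/2`.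
-/

open RealInnerProductSpace MeasureTheory
open Set Filter Topology

theorem setIntegral_prod_eq_integral_setIntegral_preimage {α β E : Type*} [MeasurableSpace α]
    [MeasurableSpace β] [NormedAddCommGroup E] [NormedSpace ℝ E] {μ : Measure α} {ν : Measure β}
    [SFinite μ] [SFinite ν] {K : α × β → E} (hK : Integrable K (μ.prod ν)) {S : Set (α × β)}
    (hS : MeasurableSet S) :
    ∫ p in S, K p ∂μ.prod ν = ∫ x, ∫ y in Prod.mk x ⁻¹' S, K (x, y) ∂ν ∂μ := by
  rw [← integral_indicator hS, integral_prod _ (hK.indicator hS)]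
  congr 1 with x
  rw [← integral_indicator (measurable_prodMk_left hS)]
  rfl

theorem integral_prod_eq_two_mul_integral_setIntegral_Iic {μ : Measure ℝ} [SFinite μ]
    [NullSingletonClass μ] {K : ℝ × ℝ → ℝ} (hK : Integrable K (μ.prod μ))
    (hK_swap : ∀ p, K p.swap = K p) :
    ∫ p, K p ∂μ.prod μ = 2 * ∫ s, ∫ u in Iic s, K (s, u) ∂μ ∂μ := by
  set L := {p : ℝ × ℝ | p.2 ≤ p.1}
  set L' := {p : ℝ × ℝ | p.2 < p.1}
  have hL : MeasurableSet L := measurableSet_le measurable_snd measurable_fst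
  have hL' : MeasurableSet L' := measurableSet_lt measurable_snd measurable_fst
  have hupper : ∫ p in Lᶜ, K p ∂μ.prod μ = ∫ p in L', K p ∂μ.prod μ := calc
    _ = ∫ p in Prod.swap ⁻¹' L', K p.swap ∂μ.prod μ := by
      simp only [hK_swap]; congr; ext p; simp [L, L']
    _ = _ := Measure.measurePreserving_swap.setIntegral_preimage_emb
      MeasurableEquiv.prodComm.measurableEmbedding K L'
  rw [← integral_add_compl hL hK, hupper,
    setIntegral_prod_eq_integral_setIntegral_preimage hK hL,
    setIntegral_prod_eq_integral_setIntegral_preimage hK hL']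
  change (∫ s, ∫ u in Iic s, K (s, u) ∂μ ∂μ) + ∫ s, ∫ u in Iio s, K (s, u) ∂μ ∂μ = _
  -- the diagonal is `μ.prod μ`-null since `μ` has no atoms
  simp_rw [← integral_Iic_eq_integral_Iio]
  ring

theorem MeasureTheory.IntegrableOn.intervalIntegrable_of_mem_Icc {F : Type*}
    [NormedAddCommGroup F] {f : ℝ → F} {a b x y : ℝ} (hf : IntegrableOn f (Icc a b))
    (hx : x ∈ Icc a b) (hy : y ∈ Icc a b) : IntervalIntegrable f volume x y :=
  (hf.mono_set (uIcc_subset_Icc hx hy)).intervalIntegrable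

theorem tendsto_intervalIntegral_nhdsGT {F : Type*} [NormedAddCommGroup F] [NormedSpace ℝ F]
    {f : ℝ → F} {x b : ℝ} (hf : IntervalIntegrable f volume x b) (hxb : x < b) :
    Tendsto (fun u => ∫ s in x..u, f s) (𝓝[>] x) (𝓝 0) := by
  have hcont := intervalIntegral.continuousOn_primitive_interval' hf left_mem_uIcc x left_mem_uIcc
  simpa using (hcont.mono_of_mem_nhdsWithin (mem_of_superset (Ioo_mem_nhdsGT hxb)
    (Ioo_subset_Icc_self.trans Icc_subset_uIcc))).tendsto

theorem eqOn_zero_of_le_intervalIntegral_mul {φ g : ℝ → ℝ} {a b : ℝ} (hφ : ∀ s, 0 ≤ φ s)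
    (hg : ∀ s, 0 ≤ g s) (hg_int : IntegrableOn g (Icc a b))
    (hgφ_int : IntegrableOn (fun s => g s * φ s) (Icc a b))
    (hφ_le : ∀ t ∈ Icc a b, φ t ≤ ∫ s in a..t, g s * φ s) :
    EqOn φ 0 (Icc a b) := by
  set ψ : ℝ → ℝ := fun t => ∫ s in a..t, g s * φ s
  have ha : ∀ {x}, x ∈ Icc a b → a ∈ Icc a b := fun hx => ⟨le_rfl, hx.1.trans hx.2⟩
  have hψ_mono : MonotoneOn ψ (Icc a b) := fun x hx y hy hxy =>
    intervalIntegral.integral_mono_interval le_rfl hx.1 hxy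
      (.of_forall fun s => mul_nonneg (hg s) (hφ s))
      (hgφ_int.intervalIntegrable_of_mem_Icc (ha hx) hy)
  -- `φ ≤ ψ ≤ ψ u` on `[x, u]` gives `ψ u ≤ ψ x + (∫ₓᵘ g) ψ u`
  have hstep : ∀ x ∈ Icc a b, ∀ u ∈ Icc a b, x ≤ u → ψ x ≤ 0 → ∫ s in x..u, g s < 1 / 2 →
      ψ u ≤ 0 := by
    intro x hx u hu hxu hψx hgu
    have hbound : ∫ s in x..u, g s * φ s ≤ (∫ s in x..u, g s) * ψ u := by
      rw [← intervalIntegral.integral_mul_const]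
      refine intervalIntegral.integral_mono_on hxu (hgφ_int.intervalIntegrable_of_mem_Icc hx hu)
        ((hg_int.intervalIntegrable_of_mem_Icc hx hu).mul_const _) fun s hs => ?_
      have hs' : s ∈ Icc a b := ⟨hx.1.trans hs.1, hs.2.trans hu.2⟩
      exact mul_le_mul_of_nonneg_left ((hφ_le s hs').trans (hψ_mono hs' hu hs.2)) (hg s)
    have hsplit : ψ u = ψ x + ∫ s in x..u, g s * φ s :=
      (intervalIntegral.integral_add_adjacent_intervals
        (hgφ_int.intervalIntegrable_of_mem_Icc (ha hx) hx)
        (hgφ_int.intervalIntegrable_of_mem_Icc hx hu)).symm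
    have hψu : 0 ≤ ψ u := by simpa [ψ] using hψ_mono (ha hu) hu hu.1
    nlinarith
  have hψ_cont : ContinuousOn ψ (Icc a b) := fun x hx => by
    have hab := uIcc_of_le (hx.1.trans hx.2)
    rw [← hab] at hx ⊢
    exact intervalIntegral.continuousOn_primitive_interval (hab ▸ hgφ_int) x hx
  have hzero : Icc a b ⊆ {t | ψ t ≤ 0} := by
    refine IsClosed.Icc_subset_of_forall_mem_nhdsWithin ?_ (by simp [ψ]) ?_
    · rw [inter_comm]
      exact hψ_cont.preimage_isClosed_of_isClosed isClosed_Icc isClosed_Iic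
    · rintro x ⟨hψx, hx⟩
      have hG := tendsto_intervalIntegral_nhdsGT (hg_int.intervalIntegrable_of_mem_Icc
        (Ico_subset_Icc_self hx) ⟨hx.1.trans hx.2.le, le_rfl⟩) hx.2
      filter_upwards [Ioo_mem_nhdsGT hx.2, hG.eventually_lt_const (by norm_num : (0:ℝ) < 1 / 2)]
        with u hu hgu
      exact hstep x (Ico_subset_Icc_self hx) u ⟨hx.1.trans hu.1.le, hu.2.le⟩ hu.1.le hψx hgu
  exact fun t ht => le_antisymm ((hφ_le t ht).trans (hzero ht)) (hφ t)

variable {E : Type*} [NormedAddCommGroup E] [InnerProductSpace ℝ E]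

theorem MeasureTheory.IntegrableOn.inner_continuousOn {μ : Measure ℝ} {K : Set ℝ} {f w : ℝ → E}
    (hf : IntegrableOn f K μ) (hw : ContinuousOn w K) (hK : IsCompact K) :
    IntegrableOn (fun x => ⟪f x, w x⟫) K μ := by
  obtain ⟨C, hC⟩ := hK.exists_bound_of_continuousOn hw
  refine (hf.norm.mul_const C).mono'
    (hf.aestronglyMeasurable.inner (hw.aestronglyMeasurable hK.measurableSet)) ?_
  filter_upwards [ae_restrict_mem hK.measurableSet] with x hx
  exact (norm_inner_le_norm _ _).trans (by gcongr; exact hC x hx)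

theorem norm_integral_sq_eq_two_mul_integral_inner_setIntegral_Iic [CompleteSpace E]
    {μ : Measure ℝ} [SFinite μ] [NullSingletonClass μ] {f : ℝ → E} (hf : Integrable f μ) :
    ‖∫ s, f s ∂μ‖ ^ 2 = 2 * ∫ s, ⟪f s, ∫ u in Iic s, f u ∂μ⟫ ∂μ := by
  have hK : Integrable (fun p : ℝ × ℝ => ⟪f p.1, f p.2⟫) (μ.prod μ) :=
    (hf.norm.mul_prod hf.norm).mono'
      (hf.aestronglyMeasurable.comp_fst.inner hf.aestronglyMeasurable.comp_snd)
      (.of_forall fun p => norm_inner_le_norm _ _)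
  calc ‖∫ s, f s ∂μ‖ ^ 2 = ∫ s, ∫ u, ⟪f s, f u⟫ ∂μ ∂μ := by
        rw [← real_inner_self_eq_norm_sq, ← integral_inner hf]
        exact integral_congr_ae
          (.of_forall fun s => (real_inner_comm _ _).trans (integral_inner hf _).symm)
    _ = ∫ p, ⟪f p.1, f p.2⟫ ∂μ.prod μ := (integral_prod _ hK).symm
    _ = _ := by
        rw [integral_prod_eq_two_mul_integral_setIntegral_Iic hK fun p => real_inner_comm _ _]
        simp_rw [integral_inner hf.integrableOn]

theorem norm_intervalIntegral_sq_eq_two_mul_integral_inner [CompleteSpace E] {f : ℝ → E}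
    {a b : ℝ} (hab : a ≤ b) (hf : IntervalIntegrable f volume a b) :
    ‖∫ s in a..b, f s‖ ^ 2 = 2 * ∫ s in a..b, ⟪f s, ∫ u in a..s, f u⟫ := by
  rw [intervalIntegral.integral_of_le hab, intervalIntegral.integral_of_le hab,
    norm_integral_sq_eq_two_mul_integral_inner_setIntegral_Iic hf.1]
  congr 1
  refine setIntegral_congr_fun measurableSet_Ioc fun s hs => ?_
  rw [Measure.restrict_restrict measurableSet_Iic, Iic_inter_Ioc_of_le hs.2,
    intervalIntegral.integral_of_le hs.1.le]

theorem norm_intervalIntegral_sq_le_integral_mul [CompleteSpace E] {f : ℝ → E} {g : ℝ → ℝ}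
    {a b : ℝ} (hf : IntervalIntegrable f volume a b) (hg_int : IntegrableOn g (Icc a b))
    (hfg : ∀ᵐ s ∂volume.restrict (Icc a b),
      ⟪∫ u in a..s, f u, f s⟫ ≤ g s * ‖∫ u in a..s, f u‖ ^ 2)
    {t : ℝ} (ht : t ∈ Icc a b) :
    ‖∫ s in a..t, f s‖ ^ 2 ≤ ∫ s in a..t, 2 * g s * ‖∫ u in a..s, f u‖ ^ 2 := by
  have ha : a ∈ Icc a b := ⟨le_rfl, ht.1.trans ht.2⟩
  have hf' : IntegrableOn f (Icc a b) :=
    (intervalIntegrable_iff_integrableOn_Icc_of_le ha.2).1 hf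
  have hW : ContinuousOn (fun s => ∫ u in a..s, f u) (Icc a b) :=
    (intervalIntegral.continuousOn_primitive_interval' hf left_mem_uIcc).mono Icc_subset_uIcc
  have h2g : IntegrableOn (fun s => 2 * g s) (Icc a b) := hg_int.const_mul 2
  have hinner : IntegrableOn (fun s => 2 * ⟪f s, ∫ u in a..s, f u⟫) (Icc a b) :=
    (hf'.inner_continuousOn hW isCompact_Icc).const_mul 2
  rw [norm_intervalIntegral_sq_eq_two_mul_integral_inner ht.1
      (hf'.intervalIntegrable_of_mem_Icc ha ht), ← intervalIntegral.integral_const_mul]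
  refine intervalIntegral.integral_mono_ae_restrict ht.1
    (hinner.intervalIntegrable_of_mem_Icc ha ht)
    ((h2g.mul_continuousOn (hW.norm.pow 2) isCompact_Icc).intervalIntegrable_of_mem_Icc ha ht) ?_
  filter_upwards [ae_restrict_of_ae_restrict_of_subset (Icc_subset_Icc_right ht.2) hfg] with s hs
  rw [real_inner_comm]
  linarith

theorem intervalIntegral_eqOn_zero_of_inner_le [CompleteSpace E] {f : ℝ → E} {g : ℝ → ℝ}
    {a b : ℝ} (hf : IntervalIntegrable f volume a b) (hg : ∀ s, 0 ≤ g s)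
    (hg_int : IntegrableOn g (Icc a b))
    (hfg : ∀ᵐ s ∂volume.restrict (Icc a b),
      ⟪∫ u in a..s, f u, f s⟫ ≤ g s * ‖∫ u in a..s, f u‖ ^ 2) :
    EqOn (fun t => ∫ s in a..t, f s) 0 (Icc a b) := by
  have hW : ContinuousOn (fun s => ∫ u in a..s, f u) (Icc a b) :=
    (intervalIntegral.continuousOn_primitive_interval' hf left_mem_uIcc).mono Icc_subset_uIcc
  have h2g : IntegrableOn (fun s => 2 * g s) (Icc a b) := hg_int.const_mul 2
  have hφ := eqOn_zero_of_le_intervalIntegral_mul (φ := fun t => ‖∫ s in a..t, f s‖ ^ 2)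
    (fun _ => sq_nonneg _) (fun s => mul_nonneg zero_le_two (hg s)) h2g
    (h2g.mul_continuousOn (hW.norm.pow 2) isCompact_Icc)
    fun t ht => norm_intervalIntegral_sq_le_integral_mul hf hg_int hfg ht
  exact fun t ht => by simpa using hφ ht

def normalCone (O : Set E) (x : E) : Set E := {k | ∀ z ∈ O, ⟪k, x - z⟫ ≥ 0}

theorem inner_sub_sub_nonneg_of_mem_normalCone {O : Set E} {x y kx ky : E} (hx : x ∈ O)
    (hy : y ∈ O) (hkx : kx ∈ normalCone O x) (hky : ky ∈ normalCone O y) :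
    0 ≤ ⟪x - y, kx - ky⟫ := by
  have h₁ := hkx y hy
  have h₂ := hky x hx
  rw [← neg_sub, inner_neg_right] at h₂
  rw [inner_sub_right, real_inner_comm, real_inner_comm ky]
  linarith

theorem LipschitzWith.inner_sub_apply_sub_le {H : Type*} [NormedAddCommGroup H] [NormedSpace ℝ H]
    {σ : E → H →L[ℝ] E} {K : NNReal} (hσ : LipschitzWith K σ) (x y : E) (h : H) :
    ⟪x - y, σ x h - σ y h⟫ ≤ K * ‖h‖ * ‖x - y‖ ^ 2 := calc
  _ ≤ ‖x - y‖ * ‖(σ x - σ y) h‖ := real_inner_le_norm _ _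
  _ ≤ ‖x - y‖ * (K * ‖x - y‖ * ‖h‖) := by
    gcongr
    exact ((σ x - σ y).le_opNorm h).trans (by gcongr; exact hσ.norm_sub_le x y)
  _ = K * ‖h‖ * ‖x - y‖ ^ 2 := by ring

theorem inner_sub_drift_sub_le {H : Type*} [NormedAddCommGroup H] [NormedSpace ℝ H]
    {b : E → E} {Cb : ℝ} (hb : ∀ x y, ⟪x - y, b x - b y⟫ ≤ Cb * ‖x - y‖ ^ 2)
    {σ : E → H →L[ℝ] E} {K : NNReal} (hσ : LipschitzWith K σ) {O : Set E} {x y kx ky : E}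
    (h : H) (hx : x ∈ O) (hy : y ∈ O) (hkx : kx ∈ normalCone O x) (hky : ky ∈ normalCone O y) :
    ⟪x - y, (b x + σ x h - kx) - (b y + σ y h - ky)⟫ ≤ (Cb + K * ‖h‖) * ‖x - y‖ ^ 2 := by
  have hsplit : (b x + σ x h - kx) - (b y + σ y h - ky)
      = (b x - b y) + (σ x h - σ y h) - (kx - ky) := by abel
  rw [hsplit, inner_sub_right, inner_add_right]
  linarith [hb x y, hσ.inner_sub_apply_sub_le x y h,
    inner_sub_sub_nonneg_of_mem_normalCone hx hy hkx hky]

theorem skeleton_equation_uniqueness_general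
    (m d : ℕ) (T Cb Cσ : ℝ)
    (b : EuclideanSpace ℝ (Fin m) → EuclideanSpace ℝ (Fin m))
    (hb : ∀ x y, ⟪x - y, b x - b y⟫ ≤ Cb * ‖x - y‖ ^ 2)
    (σ : EuclideanSpace ℝ (Fin m) → (EuclideanSpace ℝ (Fin d) →L[ℝ] EuclideanSpace ℝ (Fin m)))
    (hσ : LipschitzWith (Real.toNNReal Cσ) σ)
    (O : Set (EuclideanSpace ℝ (Fin m)))
    (hdot : ℝ → EuclideanSpace ℝ (Fin d))
    (hdotL2 : MemLp hdot 2 (volume.restrict (Set.Icc (0:ℝ) T)))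
    (X Y kX kY : ℝ → EuclideanSpace ℝ (Fin m))
    (hXO : ∀ t ∈ Set.Icc 0 T, X t ∈ O) (hYO : ∀ t ∈ Set.Icc 0 T, Y t ∈ O)
    (hXint : IntervalIntegrable (fun s => b (X s) + σ (X s) (hdot s) - kX s) volume 0 T)
    (hYint : IntervalIntegrable (fun s => b (Y s) + σ (Y s) (hdot s) - kY s) volume 0 T)
    (hX : ∀ t ∈ Set.Icc 0 T, X t = X 0 + ∫ s in (0:ℝ)..t, (b (X s) + σ (X s) (hdot s) - kX s))
    (hY : ∀ t ∈ Set.Icc 0 T, Y t = Y 0 + ∫ s in (0:ℝ)..t, (b (Y s) + σ (Y s) (hdot s) - kY s))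
    (hkX : ∀ᵐ t ∂(volume.restrict (Set.Icc (0:ℝ) T)), ∀ z ∈ O, ⟪kX t, X t - z⟫ ≥ 0)
    (hkY : ∀ᵐ t ∂(volume.restrict (Set.Icc (0:ℝ) T)), ∀ z ∈ O, ⟪kY t, Y t - z⟫ ≥ 0)
    (h0 : X 0 = Y 0) :
    ∀ t ∈ Set.Icc 0 T, X t = Y t := by
  have hXY : ∀ t ∈ Icc 0 T, X t - Y t = ∫ s in (0:ℝ)..t,
      ((b (X s) + σ (X s) (hdot s) - kX s) - (b (Y s) + σ (Y s) (hdot s) - kY s)) :=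
    fun t ht => by
      have hsub := uIcc_subset_uIcc left_mem_uIcc (Icc_subset_uIcc ht)
      rw [hX t ht, hY t ht, h0,
        intervalIntegral.integral_sub (hXint.mono_set hsub) (hYint.mono_set hsub)]
      abel
  have hb' : ∀ x y, ⟪x - y, b x - b y⟫ ≤ max Cb 0 * ‖x - y‖ ^ 2 := fun x y =>
    (hb x y).trans (by gcongr; exact le_max_left _ _)
  have hg_int : IntegrableOn (fun s => max Cb 0 + Cσ.toNNReal * ‖hdot s‖) (Icc 0 T) :=
    (integrable_const _).add ((hdotL2.integrable one_le_two).norm.const_mul _)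
  have hzero := intervalIntegral_eqOn_zero_of_inner_le (hXint.sub hYint)
    (fun s => by positivity) hg_int ?_
  · exact fun t ht => sub_eq_zero.1 ((hXY t ht).trans (hzero ht))
  filter_upwards [hkX, hkY, ae_restrict_mem measurableSet_Icc] with s hkXs hkYs hs
  rw [← hXY s hs]
  exact inner_sub_drift_sub_le hb' hσ (hdot s) (hXO s hs) (hYO s hs) hkXs hkYs

/-- Uniqueness of solutions of the skeleton equation
`x' = b(x) + σ(x)ḣ − k`, `k(t)` in the normal cone of `O` at `x(t)`. -/
theorem skeleton_equation_uniqueness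
    (m d : ℕ) (T Cb Cσ : ℝ) (hT : 0 < T)
    (b : EuclideanSpace ℝ (Fin m) → EuclideanSpace ℝ (Fin m)) (hbc : Continuous b)
    (hb : ∀ x y, ⟪x - y, b x - b y⟫ ≤ Cb * ‖x - y‖ ^ 2)
    (σ : EuclideanSpace ℝ (Fin m) → (EuclideanSpace ℝ (Fin d) →L[ℝ] EuclideanSpace ℝ (Fin m)))
    (hσ : LipschitzWith (Real.toNNReal Cσ) σ)
    (O : Set (EuclideanSpace ℝ (Fin m))) (hclosed : IsClosed O) (hconv : Convex ℝ O)
    (hdot : ℝ → EuclideanSpace ℝ (Fin d))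
    (hdotL2 : MemLp hdot 2 (volume.restrict (Set.Icc (0:ℝ) T)))
    (X Y kX kY : ℝ → EuclideanSpace ℝ (Fin m))
    (hXO : ∀ t ∈ Set.Icc 0 T, X t ∈ O) (hYO : ∀ t ∈ Set.Icc 0 T, Y t ∈ O)
    (hXint : IntervalIntegrable (fun s => b (X s) + σ (X s) (hdot s) - kX s) volume 0 T)
    (hYint : IntervalIntegrable (fun s => b (Y s) + σ (Y s) (hdot s) - kY s) volume 0 T)
    (hX : ∀ t ∈ Set.Icc 0 T, X t = X 0 + ∫ s in (0:ℝ)..t, (b (X s) + σ (X s) (hdot s) - kX s))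
    (hY : ∀ t ∈ Set.Icc 0 T, Y t = Y 0 + ∫ s in (0:ℝ)..t, (b (Y s) + σ (Y s) (hdot s) - kY s))
    (hkX : ∀ᵐ t ∂(volume.restrict (Set.Icc (0:ℝ) T)), ∀ z ∈ O, ⟪kX t, X t - z⟫ ≥ 0)
    (hkY : ∀ᵐ t ∂(volume.restrict (Set.Icc (0:ℝ) T)), ∀ z ∈ O, ⟪kY t, Y t - z⟫ ≥ 0)
    (h0 : X 0 = Y 0) :
    ∀ t ∈ Set.Icc 0 T, X t = Y t :=
  skeleton_equation_uniqueness_general m d T Cb Cσ b hb σ hσ O hdot hdotL2 X Y kX kY hXO hYO hXint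
    hYint hX hY hkX hkY h0
end

section
/- Let b, σ, 𝒪 be as follows: ⟨x−y, b(x)−b(y)⟩ ≤ C_b|x−y|², ‖σ(x)−σ(y)‖ ≤ C_σ|x−y|, 𝒪 closed convex. For ḣ ∈ L²(0,T;ℝ^d) with ‖ḣ‖_{L²} ≤ N, let X^h(·,x) denote a solution in 𝒪 of x' = b(x) + σ(x)ḣ − k, k(t) in the normal cone at x(t), with X^h(0,x) = x. Then there exists C = C(T, N, C_b, C_σ) such that for all x, y ∈ 𝒪: sup_{t∈[0,T]} |X^h(t,x) − X^h(t,y)| ≤ C|x − y|. -/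
/-!
Write `Z = X - Y`. The one-sided Lipschitz bound on `b`, the Lipschitz bound on `σ` and the
monotonicity of the normal cone give `d/dt ‖Z‖² = 2⟪Z, Z'⟫ ≤ (2 C_b + 2 C_σ ‖ḣ‖) ‖Z‖²` almost
everywhere. Since `‖Z‖²` is absolutely continuous, Gronwall's inequality with an integrable rate
gives `‖Z t‖² ≤ ‖x - y‖² exp (∫₀ᵗ (2 C_b + 2 C_σ ‖ḣ‖))`, and `2 ‖ḣ‖ ≤ 1 + ‖ḣ‖²` bounds the
exponent by `(2 C_b + C_σ) T + C_σ N²` (with `C_b`, `C_σ` replaced by their positive parts,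
as Gronwall needs a nonnegative rate).
-/

open Set Filter MeasureTheory Real RealInnerProductSpace

section AbsolutelyContinuous

variable {a b : ℝ}

theorem LipschitzOnWith.comp_absolutelyContinuousOnInterval {X Y : Type*} [PseudoMetricSpace X]
    [PseudoMetricSpace Y] {f : ℝ → X} {h : X → Y} {s : Set X} {K : NNReal}
    (hh : LipschitzOnWith K h s) (hf : AbsolutelyContinuousOnInterval f a b)
    (hfs : MapsTo f (uIcc a b) s) : AbsolutelyContinuousOnInterval (h ∘ f) a b := by
  unfold AbsolutelyContinuousOnInterval at hf ⊢
  refine squeeze_zero' (Eventually.of_forall fun _ ↦ Finset.sum_nonneg fun _ _ ↦ dist_nonneg)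
    ?_ (by simpa using hf.const_mul (K : ℝ))
  rw [eventually_inf_principal]
  filter_upwards with ⟨n, I⟩ hnI
  rw [Finset.mul_sum]
  gcongr with i hi
  exact hh.dist_le_mul _ (hfs (hnI.1 i hi).1) _ (hfs (hnI.1 i hi).2)

theorem ContDiff.comp_absolutelyContinuousOnInterval {F : Type*} [NormedAddCommGroup F]
    [NormedSpace ℝ F] {h : ℝ → F} {f : ℝ → ℝ} (hh : ContDiff ℝ 1 h)
    (hf : AbsolutelyContinuousOnInterval f a b) :
    AbsolutelyContinuousOnInterval (h ∘ f) a b := by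
  obtain ⟨M, hM⟩ := hf.exists_bound
  obtain ⟨K, hK⟩ := hh.contDiffOn.exists_lipschitzOnWith one_ne_zero (convex_Icc (-M) M)
    isCompact_Icc
  exact hK.comp_absolutelyContinuousOnInterval hf fun x hx ↦ abs_le.1 (hM x hx)

theorem AbsolutelyContinuousOnInterval.const_add {f : ℝ → ℝ} (c : ℝ)
    (hf : AbsolutelyContinuousOnInterval f a b) :
    AbsolutelyContinuousOnInterval (fun x ↦ c + f x) a b :=
  (LipschitzWith.const c).lipschitzOnWith.absolutelyContinuousOnInterval.add hf

theorem le_mul_exp_integral_of_le_add_integral {φ g : ℝ → ℝ} {A : ℝ}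
    (hφ : ContinuousOn φ (Icc a b)) (hg : IntervalIntegrable g volume a b)
    (hg0 : ∀ s ∈ Icc a b, 0 ≤ g s) (h : ∀ t ∈ Icc a b, φ t ≤ A + ∫ s in a..t, g s * φ s) :
    ∀ t ∈ Icc a b, φ t ≤ A * exp (∫ s in a..t, g s) := by
  intro t ht
  have hsub : Icc a t ⊆ Icc a b := Icc_subset_Icc_right ht.2
  have hgt : IntervalIntegrable g volume a t :=
    hg.mono_set (uIcc_subset_uIcc left_mem_uIcc (mem_uIcc_of_le ht.1 ht.2))
  have hgφ : IntervalIntegrable (fun s ↦ g s * φ s) volume a t :=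
    hgt.mul_continuousOn (by rw [uIcc_of_le ht.1]; exact hφ.mono hsub)
  set G : ℝ → ℝ := fun s ↦ ∫ u in a..s, g u
  set R : ℝ → ℝ := fun s ↦ A + ∫ u in a..s, g u * φ u
  have hR : AbsolutelyContinuousOnInterval R a t :=
    (hgφ.absolutelyContinuousOnInterval_intervalIntegral left_mem_uIcc).const_add A
  have hE : AbsolutelyContinuousOnInterval (fun s ↦ exp (-G s)) a t :=
    contDiff_exp.comp_absolutelyContinuousOnInterval
      (hgt.absolutelyContinuousOnInterval_intervalIntegral left_mem_uIcc).neg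
  -- `R e^{-G}` is nonincreasing, since `R' = g φ ≤ g R` almost everywhere.
  have hderiv : ∀ᵐ s, s ∈ uIoc a t →
      deriv R s * exp (-G s) + R s * deriv (fun s ↦ exp (-G s)) s
        = -(g s * exp (-G s) * (R s - φ s)) := by
    filter_upwards [hgt.ae_hasDerivAt_integral, hgφ.ae_hasDerivAt_integral] with s hG hGφ hs
    have hs' := uIoc_subset_uIcc hs
    have hE' : HasDerivAt (fun s ↦ exp (-G s)) (exp (-G s) * -g s) s :=
      (hG hs' a left_mem_uIcc).neg.exp
    rw [((hGφ hs' a left_mem_uIcc).const_add A).deriv, hE'.deriv]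
    ring
  have hdecay : R t * exp (-G t) ≤ A := by
    have := hR.integral_deriv_mul_eq_sub hE
    rw [intervalIntegral.integral_congr_ae hderiv, intervalIntegral.integral_neg] at this
    have hnonneg : 0 ≤ ∫ s in a..t, g s * exp (-G s) * (R s - φ s) :=
      intervalIntegral.integral_nonneg ht.1 fun s hs ↦
        mul_nonneg (mul_nonneg (hg0 s (hsub hs)) (exp_pos _).le) (sub_nonneg.2 (h s (hsub hs)))
    simp only [R, G, intervalIntegral.integral_same, add_zero, neg_zero, exp_zero, mul_one] at this
    linarith
  calc φ t ≤ R t := h t ht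
    _ = R t * exp (-G t) * exp (G t) := by
        rw [mul_assoc, ← exp_add, neg_add_cancel, exp_zero, mul_one]
    _ ≤ A * exp (G t) := mul_le_mul_of_nonneg_right hdecay (exp_pos _).le

theorem add_intervalIntegral_sq {f : ℝ → ℝ} (c : ℝ)
    (hf : IntervalIntegrable f volume a b) :
    (c + ∫ s in a..b, f s) ^ 2 = c ^ 2 + 2 * ∫ s in a..b, (c + ∫ u in a..s, f u) * f s := by
  set Z : ℝ → ℝ := fun s ↦ c + ∫ u in a..s, f u
  have hZ : AbsolutelyContinuousOnInterval Z a b :=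
    (hf.absolutelyContinuousOnInterval_intervalIntegral left_mem_uIcc).const_add c
  have hderiv : ∀ᵐ s, s ∈ uIoc a b → deriv Z s * Z s + Z s * deriv Z s = 2 * (Z s * f s) := by
    filter_upwards [hf.ae_hasDerivAt_integral] with s hs hs'
    rw [((hs (uIoc_subset_uIcc hs') a left_mem_uIcc).const_add c).deriv]
    ring
  have := hZ.integral_deriv_mul_eq_sub hZ
  rw [intervalIntegral.integral_congr_ae hderiv, intervalIntegral.integral_const_mul] at this
  simp only [Z, intervalIntegral.integral_same, add_zero] at this
  linarith

end AbsolutelyContinuous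

namespace EuclideanSpace

variable {ι : Type*} [Fintype ι] {a b : ℝ}

theorem intervalIntegrable_apply {f : ℝ → EuclideanSpace ℝ ι}
    (hf : IntervalIntegrable f volume a b) (i : ι) :
    IntervalIntegrable (fun s ↦ f s i) volume a b :=
  ⟨(EuclideanSpace.proj (𝕜 := ℝ) i).integrable_comp hf.1,
    (EuclideanSpace.proj (𝕜 := ℝ) i).integrable_comp hf.2⟩

theorem intervalIntegral_apply {f : ℝ → EuclideanSpace ℝ ι}
    (hf : IntervalIntegrable f volume a b) (i : ι) :
    (∫ s in a..b, f s) i = ∫ s in a..b, f s i :=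
  ((EuclideanSpace.proj (𝕜 := ℝ) i).intervalIntegral_comp_comm hf).symm

theorem norm_add_intervalIntegral_sq {f : ℝ → EuclideanSpace ℝ ι} (c : EuclideanSpace ℝ ι)
    (hf : IntervalIntegrable f volume a b) :
    ‖c + ∫ s in a..b, f s‖ ^ 2 = ‖c‖ ^ 2 + 2 * ∫ s in a..b, ⟪c + ∫ u in a..s, f u, f s⟫ := by
  have hfi := intervalIntegrable_apply hf
  have hsub : ∀ s ∈ uIcc a b, IntervalIntegrable f volume a s := fun s hs ↦
    hf.mono_set (uIcc_subset_uIcc left_mem_uIcc hs)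
  have hint : ∀ i, IntervalIntegrable (fun s ↦ (c i + ∫ u in a..s, f u i) * f s i) volume a b :=
    fun i ↦ (hfi i).continuousOn_mul (continuousOn_const.add
      (intervalIntegral.continuousOn_primitive_interval' (hfi i) left_mem_uIcc))
  have hinner : ∀ s ∈ uIcc a b, ⟪c + ∫ u in a..s, f u, f s⟫
      = ∑ i, (c i + ∫ u in a..s, f u i) * f s i := by
    intro s hs
    simp [PiLp.inner_apply, intervalIntegral_apply (hsub s hs), mul_comm]
  rw [intervalIntegral.integral_congr hinner, intervalIntegral.integral_finsetSum fun i _ ↦ hint i,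
    EuclideanSpace.real_norm_sq_eq, EuclideanSpace.real_norm_sq_eq, Finset.mul_sum,
    ← Finset.sum_add_distrib]
  refine Finset.sum_congr rfl fun i _ ↦ ?_
  rw [PiLp.add_apply, intervalIntegral_apply hf, add_intervalIntegral_sq _ (hfi i)]

theorem intervalIntegrable_inner {G f : ℝ → EuclideanSpace ℝ ι} (hG : ContinuousOn G (uIcc a b))
    (hf : IntervalIntegrable f volume a b) :
    IntervalIntegrable (fun s ↦ ⟪G s, f s⟫) volume a b := by
  have hsum : (fun s ↦ ⟪G s, f s⟫) = ∑ i, fun s ↦ G s i * f s i := by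
    ext s
    simp [PiLp.inner_apply, mul_comm]
  rw [hsum]
  exact IntervalIntegrable.sum _ fun i _ ↦
    (intervalIntegrable_apply hf i).continuousOn_mul
      ((PiLp.continuous_apply 2 _ i).comp_continuousOn hG)

theorem norm_le_exp_mul_of_two_inner_le {Z f : ℝ → EuclideanSpace ℝ ι} {g : ℝ → ℝ}
    {z₀ : EuclideanSpace ℝ ι} (hf : IntervalIntegrable f volume a b)
    (hZ : ∀ t ∈ Icc a b, Z t = z₀ + ∫ s in a..t, f s)
    (hg : IntervalIntegrable g volume a b) (hg0 : ∀ s ∈ Icc a b, 0 ≤ g s)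
    (hfg : ∀ᵐ s ∂volume.restrict (Icc a b), 2 * ⟪Z s, f s⟫ ≤ g s * ‖Z s‖ ^ 2) :
    ∀ t ∈ Icc a b, ‖Z t‖ ≤ exp ((∫ s in a..t, g s) / 2) * ‖z₀‖ := by
  have hsub : ∀ {t}, t ∈ Icc a b → uIcc a t ⊆ uIcc a b := fun ht ↦
    uIcc_subset_uIcc left_mem_uIcc (Icc_subset_uIcc ht)
  have hprim : ContinuousOn (fun s ↦ z₀ + ∫ u in a..s, f u) (uIcc a b) :=
    continuousOn_const.add (intervalIntegral.continuousOn_primitive_interval' hf left_mem_uIcc)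
  have hφ : ContinuousOn (fun s ↦ ‖Z s‖ ^ 2) (Icc a b) :=
    ((hprim.mono Icc_subset_uIcc).congr hZ).norm.pow 2
  have henergy : ∀ t ∈ Icc a b, ‖Z t‖ ^ 2 ≤ ‖z₀‖ ^ 2 + ∫ s in a..t, g s * ‖Z s‖ ^ 2 := by
    intro t ht
    have hft := hf.mono_set (hsub ht)
    have hsubIcc : Icc a t ⊆ Icc a b := Icc_subset_Icc_right ht.2
    rw [hZ t ht, norm_add_intervalIntegral_sq _ hft, ← intervalIntegral.integral_const_mul]
    gcongr
    refine intervalIntegral.integral_mono_ae_restrict ht.1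
      ((intervalIntegrable_inner (hprim.mono (hsub ht)) hft).const_mul 2)
      ((hg.mono_set (hsub ht)).mul_continuousOn (hφ.mono (by rwa [uIcc_of_le ht.1]))) ?_
    filter_upwards [ae_restrict_of_ae_restrict_of_subset hsubIcc hfg,
      ae_restrict_mem measurableSet_Icc] with s hs hsIcc
    rwa [← hZ s (hsubIcc hsIcc)]
  intro t ht
  refine (sq_le_sq₀ (norm_nonneg _) (by positivity)).1 ?_
  rw [mul_pow, sq (exp _), ← exp_add, add_halves, mul_comm]
  exact le_mul_exp_integral_of_le_add_integral hφ hg hg0 henergy t ht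

end EuclideanSpace

theorem sub_eq_sub_add_intervalIntegral_sub {E : Type*} [NormedAddCommGroup E] [NormedSpace ℝ E]
    {X Y f g : ℝ → E} {x y : E} {a b : ℝ} (hf : IntervalIntegrable f volume a b)
    (hg : IntervalIntegrable g volume a b) (hX : ∀ t ∈ Icc a b, X t = x + ∫ s in a..t, f s)
    (hY : ∀ t ∈ Icc a b, Y t = y + ∫ s in a..t, g s) :
    ∀ t ∈ Icc a b, X t - Y t = (x - y) + ∫ s in a..t, f s - g s := by
  intro t ht
  have hsub : uIcc a t ⊆ uIcc a b := uIcc_subset_uIcc left_mem_uIcc (Icc_subset_uIcc ht)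
  rw [intervalIntegral.integral_sub (hf.mono_set hsub) (hg.mono_set hsub), hX t ht, hY t ht]
  abel

section Drift

variable {E F : Type*} [NormedAddCommGroup E] [InnerProductSpace ℝ E] [NormedAddCommGroup F]
  [NormedSpace ℝ F]

theorem inner_sub_sub_nonneg_of_normalCone {O : Set E} {x y kx ky : E} (hx : x ∈ O) (hy : y ∈ O)
    (hkx : ∀ z ∈ O, 0 ≤ ⟪kx, x - z⟫) (hky : ∀ z ∈ O, 0 ≤ ⟪ky, y - z⟫) :
    0 ≤ ⟪x - y, kx - ky⟫ := by
  have h₁ := hkx y hy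
  have h₂ := hky x hx
  rw [← neg_sub, inner_neg_right] at h₂
  rw [inner_sub_right, real_inner_comm kx, real_inner_comm ky]
  linarith

theorem inner_sub_apply_sub_le_of_lipschitzWith {σ : E → F →L[ℝ] E} {K : NNReal}
    (hσ : LipschitzWith K σ) (x y : E) (v : F) :
    ⟪x - y, σ x v - σ y v⟫ ≤ K * ‖v‖ * ‖x - y‖ ^ 2 :=
  calc ⟪x - y, σ x v - σ y v⟫ ≤ ‖x - y‖ * ‖(σ x - σ y) v‖ := real_inner_le_norm _ _
    _ ≤ ‖x - y‖ * (K * ‖x - y‖ * ‖v‖) := by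
        gcongr
        exact ((σ x - σ y).le_opNorm v).trans (by gcongr; exact hσ.norm_sub_le x y)
    _ = K * ‖v‖ * ‖x - y‖ ^ 2 := by ring

theorem two_inner_sub_drift_sub_le {b : E → E} {σ : E → F →L[ℝ] E} {Cb : ℝ} {K : NNReal}
    (hb : ∀ x y, ⟪x - y, b x - b y⟫ ≤ Cb * ‖x - y‖ ^ 2) (hσ : LipschitzWith K σ) {O : Set E}
    {x y kx ky : E} (hx : x ∈ O) (hy : y ∈ O) (hkx : ∀ z ∈ O, 0 ≤ ⟪kx, x - z⟫)
    (hky : ∀ z ∈ O, 0 ≤ ⟪ky, y - z⟫) (v : F) :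
    2 * ⟪x - y, (b x + σ x v - kx) - (b y + σ y v - ky)⟫
      ≤ (2 * Cb + K * (1 + ‖v‖ ^ 2)) * ‖x - y‖ ^ 2 := by
  have hsplit : ⟪x - y, (b x + σ x v - kx) - (b y + σ y v - ky)⟫
      = ⟪x - y, b x - b y⟫ + ⟪x - y, σ x v - σ y v⟫ - ⟪x - y, kx - ky⟫ := by
    rw [← inner_add_right, ← inner_sub_right]
    congr 1
    abel
  have hv : K * (2 * ‖v‖) * ‖x - y‖ ^ 2 ≤ K * (1 + ‖v‖ ^ 2) * ‖x - y‖ ^ 2 := by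
    gcongr
    nlinarith [sq_nonneg (‖v‖ - 1)]
  nlinarith [hb x y, inner_sub_apply_sub_le_of_lipschitzWith hσ x y v,
    inner_sub_sub_nonneg_of_normalCone hx hy hkx hky]

end Drift

section Rate

variable {F : Type*} [NormedAddCommGroup F] {h : ℝ → F} {a b : ℝ}

theorem MeasureTheory.MemLp.intervalIntegrable_norm_sq (hh : MemLp h 2 (volume.restrict (Icc a b)))
    (hab : a ≤ b) : IntervalIntegrable (fun s ↦ ‖h s‖ ^ 2) volume a b := by
  rw [intervalIntegrable_iff_integrableOn_Ioc_of_le hab]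
  exact IntegrableOn.mono_set hh.norm.integrable_sq Ioc_subset_Icc_self

theorem intervalIntegrable_const_add_mul_one_add_norm_sq
    (hh : MemLp h 2 (volume.restrict (Icc a b))) (hab : a ≤ b) (c K : ℝ) :
    IntervalIntegrable (fun s ↦ c + K * (1 + ‖h s‖ ^ 2)) volume a b :=
  intervalIntegrable_const.add
    ((intervalIntegrable_const.add (hh.intervalIntegrable_norm_sq hab)).const_mul K)

theorem integral_const_add_mul_one_add_norm_sq_le {c K N t : ℝ} (hc : 0 ≤ c) (hK : 0 ≤ K)
    (hh : MemLp h 2 (volume.restrict (Icc a b))) (hN : ∫ s in a..b, ‖h s‖ ^ 2 ≤ N ^ 2)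
    (ht : t ∈ Icc a b) :
    ∫ s in a..t, c + K * (1 + ‖h s‖ ^ 2) ≤ (c + K) * (b - a) + K * N ^ 2 := by
  have hab := ht.1.trans ht.2
  have hsq := hh.intervalIntegrable_norm_sq hab
  calc ∫ s in a..t, c + K * (1 + ‖h s‖ ^ 2) ≤ ∫ s in a..b, c + K * (1 + ‖h s‖ ^ 2) :=
        intervalIntegral.integral_mono_interval le_rfl ht.1 ht.2
          (ae_of_all _ fun s ↦ by positivity)
          (intervalIntegrable_const_add_mul_one_add_norm_sq hh hab c K)
    _ = (c + K) * (b - a) + K * ∫ s in a..b, ‖h s‖ ^ 2 := by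
        rw [intervalIntegral.integral_add intervalIntegrable_const
          ((intervalIntegrable_const.add hsq).const_mul K), intervalIntegral.integral_const_mul,
          intervalIntegral.integral_add intervalIntegrable_const hsq]
        simp only [intervalIntegral.integral_const, smul_eq_mul]
        ring
    _ ≤ (c + K) * (b - a) + K * N ^ 2 := by gcongr

end Rate

theorem skeleton_flow_lipschitz_in_initial_condition_general
    (m d : ℕ) (T N Cb Cσ : ℝ)
    (b : EuclideanSpace ℝ (Fin m) → EuclideanSpace ℝ (Fin m))
    (hb : ∀ x y, ⟪x - y, b x - b y⟫ ≤ Cb * ‖x - y‖ ^ 2)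
    (σ : EuclideanSpace ℝ (Fin m) → (EuclideanSpace ℝ (Fin d) →L[ℝ] EuclideanSpace ℝ (Fin m)))
    (hσ : LipschitzWith (Real.toNNReal Cσ) σ)
    (O : Set (EuclideanSpace ℝ (Fin m))) :
    ∃ C : ℝ, ∀ (hdot : ℝ → EuclideanSpace ℝ (Fin d)),
      MemLp hdot 2 (volume.restrict (Set.Icc (0:ℝ) T)) →
      (∫ s in (0:ℝ)..T, ‖hdot s‖ ^ 2) ≤ N ^ 2 →
      ∀ (x y : EuclideanSpace ℝ (Fin m)) (X Y kX kY : ℝ → EuclideanSpace ℝ (Fin m)),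
      x ∈ O → y ∈ O →
      (∀ t ∈ Set.Icc 0 T, X t ∈ O) → (∀ t ∈ Set.Icc 0 T, Y t ∈ O) →
      IntervalIntegrable (fun s => b (X s) + σ (X s) (hdot s) - kX s) volume 0 T →
      IntervalIntegrable (fun s => b (Y s) + σ (Y s) (hdot s) - kY s) volume 0 T →
      X 0 = x → Y 0 = y →
      (∀ t ∈ Set.Icc 0 T, X t = x + ∫ s in (0:ℝ)..t, (b (X s) + σ (X s) (hdot s) - kX s)) →
      (∀ t ∈ Set.Icc 0 T, Y t = y + ∫ s in (0:ℝ)..t, (b (Y s) + σ (Y s) (hdot s) - kY s)) →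
      (∀ᵐ t ∂(volume.restrict (Set.Icc (0:ℝ) T)), ∀ z ∈ O, ⟪kX t, X t - z⟫ ≥ 0) →
      (∀ᵐ t ∂(volume.restrict (Set.Icc (0:ℝ) T)), ∀ z ∈ O, ⟪kY t, Y t - z⟫ ≥ 0) →
      ∀ t ∈ Set.Icc 0 T, ‖X t - Y t‖ ≤ C * ‖x - y‖ := by
  refine ⟨exp (((2 * max Cb 0 + max Cσ 0) * T + max Cσ 0 * N ^ 2) / 2), ?_⟩
  intro hdot hmem hN2 x y X Y kX kY _ _ hXO hYO hIX hIY _ _ hXeq hYeq hkX hkY t ht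
  set g : ℝ → ℝ := fun s ↦ 2 * max Cb 0 + max Cσ 0 * (1 + ‖hdot s‖ ^ 2)
  have hdiss : ∀ᵐ s ∂volume.restrict (Icc 0 T), 2 * ⟪X s - Y s,
      (b (X s) + σ (X s) (hdot s) - kX s) - (b (Y s) + σ (Y s) (hdot s) - kY s)⟫
        ≤ g s * ‖X s - Y s‖ ^ 2 := by
    filter_upwards [hkX, hkY, ae_restrict_mem measurableSet_Icc] with s hkXs hkYs hs
    refine (two_inner_sub_drift_sub_le hb hσ (hXO s hs) (hYO s hs) hkXs hkYs (hdot s)).trans ?_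
    rw [Real.coe_toNNReal']
    simp only [g]
    gcongr
    exact le_max_left _ _
  have hrate : ∫ s in 0..t, g s ≤ (2 * max Cb 0 + max Cσ 0) * (T - 0) + max Cσ 0 * N ^ 2 :=
    integral_const_add_mul_one_add_norm_sq_le (by positivity) (le_max_right _ _) hmem hN2 ht
  calc ‖X t - Y t‖ ≤ exp ((∫ s in 0..t, g s) / 2) * ‖x - y‖ :=
        EuclideanSpace.norm_le_exp_mul_of_two_inner_le (Z := fun s ↦ X s - Y s) (hIX.sub hIY)
          (sub_eq_sub_add_intervalIntegral_sub hIX hIY hXeq hYeq)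
          (intervalIntegrable_const_add_mul_one_add_norm_sq hmem (ht.1.trans ht.2) _ _)
          (fun s _ ↦ by positivity) hdiss t ht
    _ ≤ _ := by
        rw [sub_zero] at hrate
        gcongr

/-- Lipschitz dependence of the skeleton flow on the initial condition,
uniformly over controls of `L²`-norm at most `N`. -/
theorem skeleton_flow_lipschitz_in_initial_condition
    (m d : ℕ) (T N Cb Cσ : ℝ) (hT : 0 < T) (hN : 0 < N)
    (b : EuclideanSpace ℝ (Fin m) → EuclideanSpace ℝ (Fin m)) (hbc : Continuous b)
    (hb : ∀ x y, ⟪x - y, b x - b y⟫ ≤ Cb * ‖x - y‖ ^ 2)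
    (σ : EuclideanSpace ℝ (Fin m) → (EuclideanSpace ℝ (Fin d) →L[ℝ] EuclideanSpace ℝ (Fin m)))
    (hσ : LipschitzWith (Real.toNNReal Cσ) σ)
    (O : Set (EuclideanSpace ℝ (Fin m))) (hclosed : IsClosed O) (hconv : Convex ℝ O) :
    ∃ C : ℝ, ∀ (hdot : ℝ → EuclideanSpace ℝ (Fin d)),
      MemLp hdot 2 (volume.restrict (Set.Icc (0:ℝ) T)) →
      (∫ s in (0:ℝ)..T, ‖hdot s‖ ^ 2) ≤ N ^ 2 →
      ∀ (x y : EuclideanSpace ℝ (Fin m)) (X Y kX kY : ℝ → EuclideanSpace ℝ (Fin m)),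
      x ∈ O → y ∈ O →
      (∀ t ∈ Set.Icc 0 T, X t ∈ O) → (∀ t ∈ Set.Icc 0 T, Y t ∈ O) →
      IntervalIntegrable (fun s => b (X s) + σ (X s) (hdot s) - kX s) volume 0 T →
      IntervalIntegrable (fun s => b (Y s) + σ (Y s) (hdot s) - kY s) volume 0 T →
      X 0 = x → Y 0 = y →
      (∀ t ∈ Set.Icc 0 T, X t = x + ∫ s in (0:ℝ)..t, (b (X s) + σ (X s) (hdot s) - kX s)) →
      (∀ t ∈ Set.Icc 0 T, Y t = y + ∫ s in (0:ℝ)..t, (b (Y s) + σ (Y s) (hdot s) - kY s)) →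
      (∀ᵐ t ∂(volume.restrict (Set.Icc (0:ℝ) T)), ∀ z ∈ O, ⟪kX t, X t - z⟫ ≥ 0) →
      (∀ᵐ t ∂(volume.restrict (Set.Icc (0:ℝ) T)), ∀ z ∈ O, ⟪kY t, Y t - z⟫ ≥ 0) →
      ∀ t ∈ Set.Icc 0 T, ‖X t - Y t‖ ≤ C * ‖x - y‖ :=
  skeleton_flow_lipschitz_in_initial_condition_general m d T N Cb Cσ b hb σ hσ O
end

section
/- Let A be a monotone operator on ℝ^m and suppose a ∈ ℝ^m and γ > 0 are such that for every z ∈ ℝ^m with |z − a| ≤ γ there exists w ∈ A(z) (i.e., B(a,γ) ⊆ D(A)) and sup{|w| : w ∈ A(z), |z − a| ≤ γ} ≤ μ for some μ ≥ 0. Then for all (x, y) ∈ Gr(A): ⟨x − a, y⟩ ≥ γ|y| − μ|x − a| − γμ. -/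
open RealInnerProductSpace

/-! Monotonicity of `A` between `(x, y)` and a point `(z, w)` of the graph with `z` on the
sphere `‖z - a‖ = γ` in the direction of `y` gives `⟪x - a, y⟫ ≥ ⟪z - a, y⟫ + ⟪x - a, w⟫ - ⟪z - a, w⟫`;
the first term is `γ‖y‖`, and the bound `‖w‖ ≤ μ` controls the other two by Cauchy–Schwarz. -/

section

variable {E : Type*} [NormedAddCommGroup E] [InnerProductSpace ℝ E]

theorem norm_inv_norm_smul_le_one (y : E) : ‖‖y‖⁻¹ • y‖ ≤ 1 := by
  rcases eq_or_ne y 0 with rfl | hy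
  · simp
  · exact (norm_smul_inv_norm (𝕜 := ℝ) hy).le

theorem real_inner_inv_norm_smul_self (y : E) : ⟪‖y‖⁻¹ • y, y⟫ = ‖y‖ := by
  rw [real_inner_smul_self_left]
  rcases eq_or_ne ‖y‖ 0 with h | h
  · simp [h]
  · field_simp

theorem inner_le_of_inner_sub_nonneg {a x y z w : E} (h : 0 ≤ ⟪y - w, x - z⟫) :
    ⟪z - a, y⟫ + ⟪x - a, w⟫ - ⟪z - a, w⟫ ≤ ⟪x - a, y⟫ := by
  have hxz : x - z = (x - a) - (z - a) := by abel
  rw [hxz, inner_sub_left, inner_sub_right y, inner_sub_right w] at h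
  linarith [real_inner_comm y (x - a), real_inner_comm y (z - a), real_inner_comm w (x - a),
    real_inner_comm w (z - a)]

end

theorem monotone_interior_coercivity_general
    (m : ℕ) (A : EuclideanSpace ℝ (Fin m) → Set (EuclideanSpace ℝ (Fin m)))
    (hmono : ∀ x₁ x₂ y₁ y₂, y₁ ∈ A x₁ → y₂ ∈ A x₂ → ⟪y₁ - y₂, x₁ - x₂⟫ ≥ 0)
    (a : EuclideanSpace ℝ (Fin m)) (γ μ : ℝ) (hγ : 0 < γ)
    (hdom : ∀ z : EuclideanSpace ℝ (Fin m), ‖z - a‖ ≤ γ → (A z).Nonempty)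
    (hbdd : ∀ z w : EuclideanSpace ℝ (Fin m), ‖z - a‖ ≤ γ → w ∈ A z → ‖w‖ ≤ μ)
    (x y : EuclideanSpace ℝ (Fin m)) (hxy : y ∈ A x) :
    ⟪x - a, y⟫ ≥ γ * ‖y‖ - μ * ‖x - a‖ - γ * μ := by
  -- for `y = 0` the junk value `‖y‖⁻¹ = 0` makes `z = a`, which still works
  set z := a + γ • (‖y‖⁻¹ • y)
  have hza : ‖z - a‖ ≤ γ := by
    simpa [z, norm_smul, abs_of_pos hγ] using
      mul_le_of_le_one_right hγ.le (norm_inv_norm_smul_le_one y)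
  obtain ⟨w, hw⟩ := hdom z hza
  have hwμ : ‖w‖ ≤ μ := hbdd z w hza hw
  have hzy : ⟪z - a, y⟫ = γ * ‖y‖ := by
    rw [add_sub_cancel_left, real_inner_smul_left, real_inner_inv_norm_smul_self]
  have hxw : -(μ * ‖x - a‖) ≤ ⟪x - a, w⟫ := by
    have := (abs_real_inner_le_norm (x - a) w).trans
      (mul_le_mul_of_nonneg_left hwμ (norm_nonneg _))
    linarith [neg_abs_le ⟪x - a, w⟫]
  have hzw : ⟪z - a, w⟫ ≤ γ * μ :=
    (real_inner_le_norm _ _).trans (mul_le_mul hza hwμ (norm_nonneg _) hγ.le)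
  linarith [inner_le_of_inner_sub_nonneg (a := a) (hmono x z y w hxy hw)]

/-- Cépa's coercivity inequality (11), pointwise form: if a monotone operator `A`
has `B(a,γ) ⊆ D(A)` with values bounded by `μ` there, then
`⟪x − a, y⟫ ≥ γ|y| − μ|x − a| − γμ` on the graph of `A`. -/
theorem monotone_interior_coercivity
    (m : ℕ) (A : EuclideanSpace ℝ (Fin m) → Set (EuclideanSpace ℝ (Fin m)))
    (hmono : ∀ x₁ x₂ y₁ y₂, y₁ ∈ A x₁ → y₂ ∈ A x₂ → ⟪y₁ - y₂, x₁ - x₂⟫ ≥ 0)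
    (a : EuclideanSpace ℝ (Fin m)) (γ μ : ℝ) (hγ : 0 < γ) (hμ : 0 ≤ μ)
    (hdom : ∀ z : EuclideanSpace ℝ (Fin m), ‖z - a‖ ≤ γ → (A z).Nonempty)
    (hbdd : ∀ z w : EuclideanSpace ℝ (Fin m), ‖z - a‖ ≤ γ → w ∈ A z → ‖w‖ ≤ μ)
    (x y : EuclideanSpace ℝ (Fin m)) (hxy : y ∈ A x) :
    ⟪x - a, y⟫ ≥ γ * ‖y‖ - μ * ‖x - a‖ - γ * μ :=
  monotone_interior_coercivity_general m A hmono a γ μ hγ hdom hbdd x y hxy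
end
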